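/- arXiv:2210.11133 — 9 statements merged into one kernel-verified Lean document; each statement's English description precedes it below -/
import Mathlib

section
/- For every constant bet λ ∈ [0,1), the heavy NSM process E_t(λ) ≐ exp(λ(Σ_{s≤t} X̂_s − Σ_{s≤t} E[X_s | F_{s−1}])) · Π_{s≤t}(1 + λ(X_s − X̂_s)), with E_0(λ) = 1, is a non-negative supermartingale with respect to the filtration (F_t): for every t ≥ 1, E_t(λ) ≥ 0 almost surely and E[E_t(λ) | F_{t−1}] ≤ E_{t−1}(λ) almost surely. -/
open MeasureTheory Filter Finset Real

/-!
Write `c_t = E[X_t | F_{t-1}]`. One step of the process multiplies `E_{t-1}` by the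
`F_{t-1}`-measurable factor `exp (λ (X̂_t - c_t))` and by `1 + λ (X_t - X̂_t)`, whose
conditional expectation given `F_{t-1}` is `1 + λ (c_t - X̂_t)`. Pulling out what is known,
the supermartingale inequality reduces to `exp (-x) (1 + x) ≤ 1` with `x = λ (c_t - X̂_t)`,
i.e. to `1 + x ≤ exp x`. Non-negativity holds because every factor `1 + λ (X_s - X̂_s)` is at
least `1 - λ ≥ 0`.
-/

lemma Real.exp_neg_mul_one_add_le_one (x : ℝ) : exp (-x) * (1 + x) ≤ 1 :=
  calc exp (-x) * (1 + x) ≤ exp (-x) * exp x := by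
        gcongr; linarith [add_one_le_exp x]
    _ = 1 := by rw [← exp_add, neg_add_cancel, exp_zero]

lemma one_add_mul_sub_nonneg {l x h : ℝ} (hl0 : 0 ≤ l) (hl1 : l ≤ 1) (hx : 0 ≤ x)
    (hh : h ≤ 1) : 0 ≤ 1 + l * (x - h) := by
  nlinarith

section CondExp

variable {Ω : Type*} {m mΩ : MeasurableSpace Ω} {μ : Measure Ω} [IsFiniteMeasure μ]

lemma condExp_one_add_mul_sub {Y Z : Ω → ℝ} (hm : m ≤ mΩ) (hY : Integrable Y μ)
    (hZ : StronglyMeasurable[m] Z) (hZ_int : Integrable Z μ) (l : ℝ) :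
    μ[fun ω => 1 + l * (Y ω - Z ω) | m] =ᵐ[μ] fun ω => 1 + l * (μ[Y | m] ω - Z ω) := by
  have hsum : μ[fun ω => 1 + l * (Y ω - Z ω) | m]
      =ᵐ[μ] μ[fun _ => (1 : ℝ) | m] + μ[l • (Y - Z) | m] :=
    condExp_add (integrable_const 1) ((hY.sub hZ_int).smul l) m
  filter_upwards [hsum, condExp_smul (m := m) (μ := μ) l (Y - Z), condExp_sub hY hZ_int m]
    with ω h_sum h_smul h_sub
  rw [h_sum, Pi.add_apply, h_smul, Pi.smul_apply, h_sub, Pi.sub_apply,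
    condExp_of_stronglyMeasurable hm hZ hZ_int, condExp_const hm, smul_eq_mul]

lemma condExp_mul_exp_mul_one_add_le {G Y Z : Ω → ℝ} (hm : m ≤ mΩ)
    (hG : StronglyMeasurable[m] G) (hG_nonneg : 0 ≤ᵐ[μ] G) (hY : Integrable Y μ)
    (hZ : StronglyMeasurable[m] Z) (hZ_int : Integrable Z μ) (l : ℝ) :
    μ[fun ω => G ω * exp (l * (Z ω - μ[Y | m] ω)) * (1 + l * (Y ω - Z ω)) | m]
      ≤ᵐ[μ] G := by
  set F : Ω → ℝ := fun ω => G ω * exp (l * (Z ω - μ[Y | m] ω))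
  set g : Ω → ℝ := fun ω => 1 + l * (Y ω - Z ω)
  change μ[F * g | m] ≤ᵐ[μ] G
  by_cases hFg : Integrable (F * g) μ
  swap
  · rw [condExp_of_not_integrable hFg]
    exact hG_nonneg
  have hF : StronglyMeasurable[m] F :=
    hG.mul (continuous_exp.comp_stronglyMeasurable
      (stronglyMeasurable_const.mul (hZ.sub stronglyMeasurable_condExp)))
  have hg : Integrable g μ := (integrable_const 1).add ((hY.sub hZ_int).const_mul l)
  filter_upwards [condExp_mul_of_stronglyMeasurable_left hF hFg hg,
    condExp_one_add_mul_sub hm hY hZ hZ_int l, hG_nonneg] with ω h_pull h_cond hGω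
  rw [h_pull, Pi.mul_apply, h_cond, mul_assoc]
  calc G ω * (exp (l * (Z ω - μ[Y | m] ω)) * (1 + l * (μ[Y | m] ω - Z ω)))
      = G ω * (exp (-(l * (μ[Y | m] ω - Z ω))) * (1 + l * (μ[Y | m] ω - Z ω))) := by ring_nf
    _ ≤ G ω * 1 := by gcongr; exact exp_neg_mul_one_add_le_one _
    _ = G ω := mul_one _

end CondExp

section HeavyNSM

variable {Ω : Type*} {mΩ : MeasurableSpace Ω} (μ : Measure Ω) (ℱ : Filtration ℕ mΩ)
  (X Xhat : ℕ → Ω → ℝ) (l : ℝ)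

noncomputable def heavyNSM (t : ℕ) (ω : Ω) : ℝ :=
  exp (l * ((∑ s ∈ Icc 1 t, Xhat s ω) - ∑ s ∈ Icc 1 t, (μ[X s | ℱ (s - 1)]) ω))
    * ∏ s ∈ Icc 1 t, (1 + l * (X s ω - Xhat s ω))

lemma heavyNSM_succ (n : ℕ) (ω : Ω) :
    heavyNSM μ ℱ X Xhat l (n + 1) ω
      = heavyNSM μ ℱ X Xhat l n ω * exp (l * (Xhat (n + 1) ω - μ[X (n + 1) | ℱ n] ω))
        * (1 + l * (X (n + 1) ω - Xhat (n + 1) ω)) := by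
  simp only [heavyNSM, sum_Icc_succ_top (Nat.le_add_left 1 n),
    prod_Icc_succ_top (Nat.le_add_left 1 n), Nat.add_sub_cancel]
  rw [← mul_rotate (exp _), ← exp_add]
  ring_nf

variable {μ ℱ X Xhat l}

lemma heavyNSM_nonneg (hl0 : 0 ≤ l) (hl1 : l ≤ 1)
    (hX : ∀ t, 1 ≤ t → ∀ᵐ ω ∂μ, 0 ≤ X t ω)
    (hXhat : ∀ t, 1 ≤ t → ∀ᵐ ω ∂μ, Xhat t ω ∈ Set.Icc (0 : ℝ) 1) (n : ℕ) :
    ∀ᵐ ω ∂μ, 0 ≤ heavyNSM μ ℱ X Xhat l n ω := by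
  have hfactors : ∀ᵐ ω ∂μ, ∀ s ∈ Icc 1 n, 0 ≤ 1 + l * (X s ω - Xhat s ω) := by
    refine (eventually_all_finset _).2 fun s hs => ?_
    filter_upwards [hX s (mem_Icc.1 hs).1, hXhat s (mem_Icc.1 hs).1] with ω hXω hXhatω
    exact one_add_mul_sub_nonneg hl0 hl1 hXω hXhatω.2
  filter_upwards [hfactors] with ω hω
  exact mul_nonneg (exp_nonneg _) (prod_nonneg hω)

lemma stronglyMeasurable_heavyNSM (hX : Adapted ℱ X)
    (hXhat : ∀ t, 1 ≤ t → StronglyMeasurable[ℱ (t - 1)] (Xhat t)) (n : ℕ) :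
    StronglyMeasurable[ℱ n] (heavyNSM μ ℱ X Xhat l n) := by
  have hXhat_n : ∀ s ∈ Icc 1 n, StronglyMeasurable[ℱ n] (Xhat s) := fun s hs =>
    (hXhat s (mem_Icc.1 hs).1).mono (ℱ.mono (by grind))
  have hX_n : ∀ s ∈ Icc 1 n, StronglyMeasurable[ℱ n] (X s) := fun s hs =>
    (hX s).stronglyMeasurable.mono (ℱ.mono (mem_Icc.1 hs).2)
  have hc_n : ∀ s ∈ Icc 1 n, StronglyMeasurable[ℱ n] (μ[X s | ℱ (s - 1)]) := fun s hs =>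
    stronglyMeasurable_condExp.mono (ℱ.mono (by grind))
  refine (continuous_exp.comp_stronglyMeasurable (stronglyMeasurable_const.mul
    ((stronglyMeasurable_fun_sum _ hXhat_n).sub (stronglyMeasurable_fun_sum _ hc_n)))).mul
    (stronglyMeasurable_fun_prod _ fun s hs => ?_)
  exact stronglyMeasurable_const.add (stronglyMeasurable_const.mul
    ((hX_n s hs).sub (hXhat_n s hs)))

end HeavyNSM

theorem heavy_nsm_is_nonneg_supermartingale_general
    {Ω : Type*} {mΩ : MeasurableSpace Ω} {μ : Measure Ω} [IsProbabilityMeasure μ]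
    (ℱ : Filtration ℕ mΩ)
    (X Xhat : ℕ → Ω → ℝ)
    (hX_adapted : Adapted ℱ X)
    (hX_int : ∀ t, Integrable (X t) μ)
    (hX_nonneg : ∀ t, 1 ≤ t → ∀ᵐ ω ∂μ, 0 ≤ X t ω)
    (hXhat_pred : ∀ t, 1 ≤ t → StronglyMeasurable[ℱ (t - 1)] (Xhat t))
    (hXhat_range : ∀ t, 1 ≤ t → ∀ᵐ ω ∂μ, Xhat t ω ∈ Set.Icc (0 : ℝ) 1)
    (l : ℝ) (hl : l ∈ Set.Ico (0 : ℝ) 1)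
    (E : ℕ → Ω → ℝ)
    (hE : ∀ t ω, E t ω =
      Real.exp (l * ((∑ s ∈ Finset.Icc 1 t, Xhat s ω)
          - ∑ s ∈ Finset.Icc 1 t, (μ[X s | ℱ (s - 1)]) ω))
        * ∏ s ∈ Finset.Icc 1 t, (1 + l * (X s ω - Xhat s ω))) :
    ∀ t, 1 ≤ t →
      (∀ᵐ ω ∂μ, 0 ≤ E t ω) ∧ (μ[E t | ℱ (t - 1)] ≤ᵐ[μ] E (t - 1)) := by
  obtain rfl : E = heavyNSM μ ℱ X Xhat l := funext fun t => funext (hE t)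
  have hE_nonneg := heavyNSM_nonneg (ℱ := ℱ) hl.1 hl.2.le hX_nonneg hXhat_range
  intro t ht
  obtain ⟨n, rfl⟩ : ∃ n, t = n + 1 := ⟨t - 1, by omega⟩
  refine ⟨hE_nonneg _, ?_⟩
  have hXhat_int : Integrable (Xhat (n + 1)) μ :=
    .of_bound ((hXhat_pred (n + 1) ht).mono (ℱ.le n)).aestronglyMeasurable 1 <| by
      filter_upwards [hXhat_range (n + 1) ht] with ω hω
      exact abs_le.2 ⟨by linarith [hω.1], hω.2⟩
  simp only [funext (heavyNSM_succ μ ℱ X Xhat l n), Nat.add_sub_cancel]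
  exact condExp_mul_exp_mul_one_add_le (ℱ.le n)
    (stronglyMeasurable_heavyNSM hX_adapted hXhat_pred n) (hE_nonneg n) (hX_int (n + 1))
    (hXhat_pred (n + 1) ht) hXhat_int l

/-- **Heavy NSM is a non-negative supermartingale.**
For adapted non-negative `X` with conditional mean at most 1, predictable `[0,1]`-valued
`Xhat`, and constant bet `l ∈ [0,1)`, the process
`E_t(l) = exp(l (Σ_{s≤t} Xhat_s − Σ_{s≤t} E[X_s | F_{s−1}])) · Π_{s≤t} (1 + l (X_s − Xhat_s))`
(with `E_0 = 1`) satisfies, for every `t ≥ 1`: `E_t ≥ 0` a.s. and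
`E[E_t | F_{t−1}] ≤ E_{t−1}` a.s. -/
theorem heavy_nsm_is_nonneg_supermartingale
    {Ω : Type*} {mΩ : MeasurableSpace Ω} {μ : Measure Ω} [IsProbabilityMeasure μ]
    (ℱ : Filtration ℕ mΩ)
    (X Xhat : ℕ → Ω → ℝ)
    (hX_adapted : Adapted ℱ X)
    (hX_int : ∀ t, Integrable (X t) μ)
    (hX_nonneg : ∀ t, 1 ≤ t → ∀ᵐ ω ∂μ, 0 ≤ X t ω)
    (hX_mean : ∀ t, 1 ≤ t → ∀ᵐ ω ∂μ, (μ[X t | ℱ (t - 1)]) ω ≤ 1)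
    (hXhat_pred : ∀ t, 1 ≤ t → StronglyMeasurable[ℱ (t - 1)] (Xhat t))
    (hXhat_range : ∀ t, 1 ≤ t → ∀ᵐ ω ∂μ, Xhat t ω ∈ Set.Icc (0 : ℝ) 1)
    (l : ℝ) (hl : l ∈ Set.Ico (0 : ℝ) 1)
    (E : ℕ → Ω → ℝ)
    (hE : ∀ t ω, E t ω =
      Real.exp (l * ((∑ s ∈ Finset.Icc 1 t, Xhat s ω)
          - ∑ s ∈ Finset.Icc 1 t, (μ[X s | ℱ (s - 1)]) ω))
        * ∏ s ∈ Finset.Icc 1 t, (1 + l * (X s ω - Xhat s ω))) :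
    ∀ t, 1 ≤ t →
      (∀ᵐ ω ∂μ, 0 ≤ E t ω) ∧ (μ[E t | ℱ (t - 1)] ≤ᵐ[μ] E (t - 1)) :=
  heavy_nsm_is_nonneg_supermartingale_general ℱ X Xhat hX_adapted hX_int hX_nonneg hXhat_pred
    hXhat_range l hl E hE
end

section
/- For the same λ ∈ [0,1) and the same predictable process (X̂_t), the heavy NSM is at least as wealthy as the empirical Bernstein supermartingale: for every t ≥ 0, E_t(λ) ≥ B_t(λ) almost surely, where E_t(λ) ≐ exp(λ(Σ_{s≤t} X̂_s − Σ_{s≤t} E[X_s | F_{s−1}])) · Π_{s≤t}(1 + λ(X_s − X̂_s)) and B_t(λ) ≐ exp(λ Σ_{s≤t} Y_s − ψ_E(λ) Σ_{s≤t} (X_s − X̂_s)²) with Y_s ≐ X_s − E[X_s | F_{s−1}] and ψ_E(x) ≐ −x − log(1 − x). -/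
open MeasureTheory Filter Finset Real

/-! For `y ≥ -1` the map `x ↦ log (1 + x y) - x y - (x + log (1 - x)) y²` vanishes at `0` and has
derivative `x² y² (1 + y) / ((1 + x y)(1 - x)) ≥ 0` on `[0, 1)`; hence
`exp (l y - ψ_E(l) y²) ≤ 1 + l y` for every bet `l ∈ [0, 1)`. Applied to `y = X_s - X̂_s ≥ -1`
factor by factor, this bounds `B_t(l)` by `E_t(l)` pathwise, once `exp (l Σ Y_s)` is split as
`exp (l (Σ X̂_s - Σ E[X_s | F_{s-1}])) · Π exp (l (X_s - X̂_s))`. -/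

section FanInequality

variable {y : ℝ}

lemma hasDerivAt_log_one_add_mul_sub_bernstein {x : ℝ} (hxy : 0 < 1 + x * y) (hx : x < 1) :
    HasDerivAt (fun x => log (1 + x * y) - x * y - (x + log (1 - x)) * y ^ 2)
      (x ^ 2 * y ^ 2 * (1 + y) / ((1 + x * y) * (1 - x))) x := by
  have hlin : HasDerivAt (fun x : ℝ => 1 + x * y) y x := by
    simpa using ((hasDerivAt_id x).mul_const y).const_add 1
  have hsub : HasDerivAt (fun x : ℝ => 1 - x) (-1) x := by
    simpa using (hasDerivAt_id x).const_sub 1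
  have hsub_ne : 1 - x ≠ 0 := sub_ne_zero.mpr hx.ne'
  have h := ((hlin.log hxy.ne').sub ((hasDerivAt_id x).mul_const y)).sub
    (((hasDerivAt_id x).add (hsub.log hsub_ne)).mul_const (y ^ 2))
  refine h.congr_deriv ?_
  rw [eq_div_iff (mul_ne_zero hxy.ne' hsub_ne)]
  linear_combination (1 - x) * div_mul_cancel₀ y hxy.ne'
    - y ^ 2 * (1 + x * y) * div_mul_cancel₀ (-1) hsub_ne

lemma monotoneOn_log_one_add_mul_sub_bernstein (hy : -1 ≤ y) :
    MonotoneOn (fun x => log (1 + x * y) - x * y - (x + log (1 - x)) * y ^ 2) (Set.Ico 0 1) := by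
  have hpos : ∀ x ∈ Set.Ico (0 : ℝ) 1, 0 < 1 + x * y := fun x hx => by nlinarith [hx.1, hx.2]
  have hderiv : ∀ x ∈ Set.Ico (0 : ℝ) 1, HasDerivAt
      (fun x => log (1 + x * y) - x * y - (x + log (1 - x)) * y ^ 2)
      (x ^ 2 * y ^ 2 * (1 + y) / ((1 + x * y) * (1 - x))) x :=
    fun x hx => hasDerivAt_log_one_add_mul_sub_bernstein (hpos x hx) hx.2
  refine monotoneOn_of_hasDerivWithinAt_nonneg (convex_Ico 0 1)
    (fun x hx => (hderiv x hx).continuousAt.continuousWithinAt)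
    (fun x hx => (hderiv x (Set.Ioo_subset_Ico_self (by rwa [interior_Ico] at hx))).hasDerivWithinAt)
    fun x hx => ?_
  rw [interior_Ico] at hx
  have hxy := hpos x (Set.Ioo_subset_Ico_self hx)
  have hx1 : 0 < 1 - x := sub_pos.mpr hx.2
  have hy1 : 0 ≤ 1 + y := by linarith
  positivity

lemma mul_sub_psiE_mul_sq_le_log_one_add (hy : -1 ≤ y) {l : ℝ} (hl : l ∈ Set.Ico (0 : ℝ) 1) :
    l * y - (-l - log (1 - l)) * y ^ 2 ≤ log (1 + l * y) := by
  have := monotoneOn_log_one_add_mul_sub_bernstein hy (Set.left_mem_Ico.mpr (hl.1.trans_lt hl.2))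
    hl hl.1
  simp only [zero_mul, add_zero, log_one, sub_zero, sub_self] at this
  linarith

lemma exp_mul_sub_psiE_mul_sq_le_one_add (hy : -1 ≤ y) {l : ℝ} (hl : l ∈ Set.Ico (0 : ℝ) 1) :
    exp (l * y - (-l - log (1 - l)) * y ^ 2) ≤ 1 + l * y := by
  have hpos : 0 < 1 + l * y := by nlinarith [hl.1, hl.2]
  calc exp (l * y - (-l - log (1 - l)) * y ^ 2) ≤ exp (log (1 + l * y)) :=
        exp_le_exp.mpr (mul_sub_psiE_mul_sq_le_log_one_add hy hl)
    _ = 1 + l * y := exp_log hpos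

end FanInequality

lemma exp_empirical_bernstein_le_heavy_wealth {ι : Type*} (S : Finset ι) (x xhat m : ι → ℝ)
    (hx : ∀ i ∈ S, 0 ≤ x i) (hxhat : ∀ i ∈ S, xhat i ≤ 1) {l : ℝ} (hl : l ∈ Set.Ico (0 : ℝ) 1) :
    exp (l * ∑ i ∈ S, (x i - m i) - (-l - log (1 - l)) * ∑ i ∈ S, (x i - xhat i) ^ 2)
      ≤ exp (l * (∑ i ∈ S, xhat i - ∑ i ∈ S, m i)) * ∏ i ∈ S, (1 + l * (x i - xhat i)) :=
  calc exp (l * ∑ i ∈ S, (x i - m i) - (-l - log (1 - l)) * ∑ i ∈ S, (x i - xhat i) ^ 2)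
      = exp (l * (∑ i ∈ S, xhat i - ∑ i ∈ S, m i))
          * ∏ i ∈ S, exp (l * (x i - xhat i) - (-l - log (1 - l)) * (x i - xhat i) ^ 2) := by
        rw [← exp_sum, ← exp_add]
        congr 1
        simp only [sum_sub_distrib, ← mul_sum]
        ring
    _ ≤ exp (l * (∑ i ∈ S, xhat i - ∑ i ∈ S, m i)) * ∏ i ∈ S, (1 + l * (x i - xhat i)) := by
        gcongr with i hi
        exact exp_mul_sub_psiE_mul_sq_le_one_add (by linarith [hx i hi, hxhat i hi]) hl

theorem heavy_nsm_dominates_empirical_bernstein_general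
    {Ω : Type*} {mΩ : MeasurableSpace Ω} {μ : Measure Ω}
    (ℱ : Filtration ℕ mΩ)
    (X Xhat : ℕ → Ω → ℝ)
    (hX_nonneg : ∀ t, 1 ≤ t → ∀ᵐ ω ∂μ, 0 ≤ X t ω)
    (hXhat_range : ∀ t, 1 ≤ t → ∀ᵐ ω ∂μ, Xhat t ω ∈ Set.Icc (0 : ℝ) 1)
    (l : ℝ) (hl : l ∈ Set.Ico (0 : ℝ) 1)
    (ψE : ℝ → ℝ) (hψE : ∀ x, ψE x = -x - Real.log (1 - x))
    (Y : ℕ → Ω → ℝ)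
    (hY : ∀ s ω, Y s ω = X s ω - (μ[X s | ℱ (s - 1)]) ω)
    (E B : ℕ → Ω → ℝ)
    (hE : ∀ t ω, E t ω =
      Real.exp (l * ((∑ s ∈ Finset.Icc 1 t, Xhat s ω)
          - ∑ s ∈ Finset.Icc 1 t, (μ[X s | ℱ (s - 1)]) ω))
        * ∏ s ∈ Finset.Icc 1 t, (1 + l * (X s ω - Xhat s ω)))
    (hB : ∀ t ω, B t ω =
      Real.exp (l * ∑ s ∈ Finset.Icc 1 t, Y s ω
        - ψE l * ∑ s ∈ Finset.Icc 1 t, (X s ω - Xhat s ω) ^ 2)) :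
    ∀ t, ∀ᵐ ω ∂μ, B t ω ≤ E t ω := by
  intro t
  have hbounds : ∀ᵐ ω ∂μ, ∀ s ∈ Icc 1 t, 0 ≤ X s ω ∧ Xhat s ω ≤ 1 := by
    refine (ae_ball_iff (Icc 1 t).countable_toSet).mpr fun s hs => ?_
    have hs1 := (mem_Icc.mp hs).1
    filter_upwards [hX_nonneg s hs1, hXhat_range s hs1] with ω hX hXhat
    exact ⟨hX, hXhat.2⟩
  filter_upwards [hbounds] with ω hω
  rw [hB, hE, hψE, sum_congr rfl fun s _ => hY s ω]
  exact exp_empirical_bernstein_le_heavy_wealth _ _ _ _ (fun s hs => (hω s hs).1)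
    (fun s hs => (hω s hs).2) hl

/-- **Empirical Bernstein dominance.** For the same bet `l ∈ [0,1)` and predictable `Xhat`,
the heavy NSM `E_t(l)` is almost surely at least as wealthy as the empirical Bernstein
supermartingale `B_t(l) = exp(l Σ_{s≤t} Y_s − ψ_E(l) Σ_{s≤t} (X_s − Xhat_s)²)`,
where `Y_s = X_s − E[X_s | F_{s−1}]` and `ψ_E(x) = −x − log(1−x)`. -/
theorem heavy_nsm_dominates_empirical_bernstein
    {Ω : Type*} {mΩ : MeasurableSpace Ω} {μ : Measure Ω} [IsProbabilityMeasure μ]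
    (ℱ : Filtration ℕ mΩ)
    (X Xhat : ℕ → Ω → ℝ)
    (hX_adapted : StronglyAdapted ℱ X)
    (hX_int : ∀ t, Integrable (X t) μ)
    (hX_nonneg : ∀ t, 1 ≤ t → ∀ᵐ ω ∂μ, 0 ≤ X t ω)
    (hX_mean : ∀ t, 1 ≤ t → ∀ᵐ ω ∂μ, (μ[X t | ℱ (t - 1)]) ω ≤ 1)
    (hXhat_pred : ∀ t, 1 ≤ t → StronglyMeasurable[ℱ (t - 1)] (Xhat t))
    (hXhat_range : ∀ t, 1 ≤ t → ∀ᵐ ω ∂μ, Xhat t ω ∈ Set.Icc (0 : ℝ) 1)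
    (l : ℝ) (hl : l ∈ Set.Ico (0 : ℝ) 1)
    (ψE : ℝ → ℝ) (hψE : ∀ x, ψE x = -x - Real.log (1 - x))
    (Y : ℕ → Ω → ℝ)
    (hY : ∀ s ω, Y s ω = X s ω - (μ[X s | ℱ (s - 1)]) ω)
    (E B : ℕ → Ω → ℝ)
    (hE : ∀ t ω, E t ω =
      Real.exp (l * ((∑ s ∈ Finset.Icc 1 t, Xhat s ω)
          - ∑ s ∈ Finset.Icc 1 t, (μ[X s | ℱ (s - 1)]) ω))
        * ∏ s ∈ Finset.Icc 1 t, (1 + l * (X s ω - Xhat s ω)))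
    (hB : ∀ t ω, B t ω =
      Real.exp (l * ∑ s ∈ Finset.Icc 1 t, Y s ω
        - ψE l * ∑ s ∈ Finset.Icc 1 t, (X s ω - Xhat s ω) ^ 2)) :
    ∀ t, ∀ᵐ ω ∂μ, B t ω ≤ E t ω :=
  heavy_nsm_dominates_empirical_bernstein_general ℱ X Xhat hX_nonneg hXhat_range l hl ψE hψE Y hY E
    B hE hB
end

section
/- (Fan-type inequality underlying the dominance theorem.) For every λ ∈ [0,1) and every real x ≥ −1, one has λx − log(1 + λx) ≤ (−λ − log(1 − λ)) · x², i.e. g(λ, x) ≤ ψ_E(λ) x². -/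
/-! With `h u = u - log (1 + u)`, differentiating `t ↦ h (t u)` gives
`h u = u ^ 2 * ∫ t in 0..1, t / (1 + t u)`, and the integral is antitone in `u`.
Comparing `u = l x` with `u = -l ≤ l x` yields `h (l x) ≤ x ^ 2 h (-l)`. -/

open Real Set

noncomputable def logRemainderIntegral (u : ℝ) : ℝ :=
  ∫ t in (0 : ℝ)..1, t / (1 + t * u)

lemma one_add_mul_pos_of_mem_Icc {t u : ℝ} (ht : t ∈ Icc (0 : ℝ) 1) (hu : -1 < u) :
    0 < 1 + t * u := by
  rcases le_total 0 u with hu0 | hu0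
  · nlinarith [ht.1]
  · nlinarith [ht.2]

lemma intervalIntegrable_div_one_add_mul {u : ℝ} (hu : -1 < u) :
    IntervalIntegrable (fun t => t / (1 + t * u)) MeasureTheory.volume 0 1 := by
  refine ContinuousOn.intervalIntegrable ?_
  rw [uIcc_of_le zero_le_one]
  exact continuousOn_id.div (by fun_prop) fun t ht => (one_add_mul_pos_of_mem_Icc ht hu).ne'

lemma sub_log_one_add_eq_sq_mul {u : ℝ} (hu : -1 < u) :
    u - log (1 + u) = u ^ 2 * logRemainderIntegral u := by
  have hderiv : ∀ t ∈ uIcc (0 : ℝ) 1,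
      HasDerivAt (fun s => s * u - log (1 + s * u)) (u ^ 2 * (t / (1 + t * u))) t := by
    intro t ht
    rw [uIcc_of_le zero_le_one] at ht
    have hne := (one_add_mul_pos_of_mem_Icc ht hu).ne'
    have hlog := ((hasDerivAt_mul_const u).const_add 1).log hne
    refine ((hasDerivAt_mul_const u).sub hlog).congr_deriv ?_
    rw [eq_comm, mul_div_assoc', div_eq_iff hne, sub_mul, div_mul_cancel₀ _ hne]
    ring
  have hftc := intervalIntegral.integral_eq_sub_of_hasDerivAt hderiv
    ((intervalIntegrable_div_one_add_mul hu).const_mul (u ^ 2))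
  rw [logRemainderIntegral, ← intervalIntegral.integral_const_mul, hftc]
  simp

lemma logRemainderIntegral_antitoneOn : AntitoneOn logRemainderIntegral (Ioi (-1)) := by
  intro b hb a ha hba
  refine intervalIntegral.integral_mono_on zero_le_one (intervalIntegrable_div_one_add_mul ha)
    (intervalIntegrable_div_one_add_mul hb) fun t ht => ?_
  exact div_le_div_of_nonneg_left ht.1 (one_add_mul_pos_of_mem_Icc ht hb)
    (by nlinarith [ht.1])

/-- **Fan-type inequality.** For every `l ∈ [0,1)` and every `x ≥ −1`,
`l x − log(1 + l x) ≤ (−l − log(1 − l)) · x²`, i.e. `g(l, x) ≤ ψ_E(l) x²`. -/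
theorem fan_inequality (l x : ℝ) (hl0 : 0 ≤ l) (hl1 : l < 1) (hx : -1 ≤ x) :
    l * x - Real.log (1 + l * x) ≤ (-l - Real.log (1 - l)) * x ^ 2 := by
  have hneg : -1 < -l := by linarith
  have hlx : -l ≤ l * x := by nlinarith
  calc l * x - log (1 + l * x) = (l * x) ^ 2 * logRemainderIntegral (l * x) :=
        sub_log_one_add_eq_sq_mul (hneg.trans_le hlx)
    _ ≤ (l * x) ^ 2 * logRemainderIntegral (-l) :=
        mul_le_mul_of_nonneg_left (logRemainderIntegral_antitoneOn hneg (hneg.trans_le hlx) hlx)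
          (sq_nonneg _)
    _ = ((-l) ^ 2 * logRemainderIntegral (-l)) * x ^ 2 := by ring
    _ = (-l - log (1 - l)) * x ^ 2 := by
        rw [← sub_log_one_add_eq_sq_mul hneg, ← sub_eq_add_neg]
end

section
/- (q-growth lemma.) Fix q ∈ (1,2]. For q < 2 let x*(q) > 0 be the unique positive solution of q = x²/((1+x)(x − log(1+x))) and set c*(q) ≐ x*(q)^{2−q}; set c*(2) ≐ 1. Then for every λ ∈ [0,1) satisfying −λ − log(1−λ) ≤ λ² and every real x ≥ −1: λx − log(1 + λx) ≤ λ^q · ( 1_{x ≤ 0} x² + 1_{x > 0} min(x², c*(q) x^q) ). -/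
open Real

/-! Write `u y = y - log (1 + y)`, so that the left-hand side is `u (l * x)`.

For `x ≤ 0` the ratio `u y / y ^ 2` grows with `|y|` on `(-1, 0]`, since its power series in `-y`
has nonnegative coefficients; admissibility says exactly that this ratio is at most `1` at
`y = -l`, hence `u (l * x) ≤ l ^ 2 * x ^ 2 ≤ l ^ q * x ^ 2`. For `x > 0` the bound
`u y ≤ y ^ 2` gives the first entry of the minimum. For the second, `β` decreases on `(0, ∞)` and the
derivative of `u y / y ^ q` has the sign of `β y - q`, so this ratio decreases beyond `x*`,
where `u ≤ y ^ 2` bounds it by `x* ^ (2 - q)`; below `x*` one uses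
`u y ≤ y ^ 2 = y ^ (2 - q) * y ^ q ≤ x* ^ (2 - q) * y ^ q`. -/

lemma sub_log_one_add_pos {y : ℝ} (hy : -1 < y) (hy0 : y ≠ 0) : 0 < y - log (1 + y) := by
  have := log_lt_sub_one_of_pos (by linarith : 0 < 1 + y) (by simpa using hy0)
  linarith

lemma sub_log_one_add_le_sq {y : ℝ} (hy : 0 ≤ y) : y - log (1 + y) ≤ y ^ 2 := by
  have h := one_sub_inv_le_log_of_pos (by linarith : 0 < 1 + y)
  have : 1 - (1 + y)⁻¹ = y - y ^ 2 / (1 + y) := by field_simp; ring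
  have : y ^ 2 / (1 + y) ≤ y ^ 2 := div_le_self (sq_nonneg y) (by linarith)
  linarith

lemma hasDerivAt_sub_log_one_add {y : ℝ} (hy : -1 < y) :
    HasDerivAt (fun t => t - log (1 + t)) (y / (1 + y)) y := by
  have hy' : 1 + y ≠ 0 := by linarith
  refine ((hasDerivAt_id' y).fun_sub (((hasDerivAt_id' y).const_add 1).log hy')).congr_deriv ?_
  field_simp
  ring

lemma sq_mul_neg_sub_log_one_sub_le {s t : ℝ} (hs : 0 ≤ s) (hst : s ≤ t) (ht : t < 1) :
    t ^ 2 * (-s - log (1 - s)) ≤ s ^ 2 * (-t - log (1 - t)) := by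
  have tail {r : ℝ} (hr0 : 0 ≤ r) (hr1 : r < 1) :
      HasSum (fun n : ℕ => r ^ (n + 2) / (n + 2)) (-r - log (1 - r)) := by
    have h := (hasSum_nat_add_iff' 1).mpr
      (hasSum_pow_div_log_of_abs_lt_one (abs_lt.mpr ⟨by linarith, hr1⟩))
    norm_num [add_assoc] at h
    simpa [sub_eq_neg_add, add_comm] using h
  refine hasSum_le (fun n => ?_) ((tail hs (hst.trans_lt ht)).mul_left (t ^ 2))
    ((tail (hs.trans hst) ht).mul_left (s ^ 2))
  rw [mul_div_assoc', mul_div_assoc']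
  refine div_le_div_of_nonneg_right ?_ (by positivity)
  calc t ^ 2 * s ^ (n + 2) = s ^ 2 * (t ^ 2 * s ^ n) := by ring
    _ ≤ s ^ 2 * (t ^ 2 * t ^ n) := by gcongr
    _ = s ^ 2 * t ^ (n + 2) := by ring

lemma mul_sub_log_one_add_mul_le_sq_mul_sq {l x : ℝ} (hl : l ∈ Set.Ico (0 : ℝ) 1)
    (hadm : -l - log (1 - l) ≤ l ^ 2) (hx : -1 ≤ x) :
    l * x - log (1 + l * x) ≤ l ^ 2 * x ^ 2 := by
  obtain ⟨hl0, hl1⟩ := hl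
  rcases le_total 0 x with hx0 | hx0
  · simpa [mul_pow] using sub_log_one_add_le_sq (mul_nonneg hl0 hx0)
  rcases hl0.eq_or_lt with rfl | hl0
  · simp
  have h := sq_mul_neg_sub_log_one_sub_le (s := -(l * x)) (t := l)
    (by nlinarith) (by nlinarith) hl1
  simp only [neg_neg, sub_neg_eq_add, neg_sq] at h
  have : l ^ 2 * (l * x - log (1 + l * x)) ≤ l ^ 2 * (l ^ 2 * x ^ 2) := by
    calc _ ≤ (l * x) ^ 2 * (-l - log (1 - l)) := h
      _ ≤ (l * x) ^ 2 * l ^ 2 := by gcongr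
      _ = _ := by ring
  exact le_of_mul_le_mul_left this (by positivity)

noncomputable def beta (x : ℝ) : ℝ := x ^ 2 / ((1 + x) * (x - log (1 + x)))

lemma antitoneOn_beta : AntitoneOn beta (Set.Ioi 0) := by
  have hderiv : ∀ y ∈ Set.Ioi (0 : ℝ), HasDerivAt beta
      (y * ((2 + y) * (y - log (1 + y)) - y ^ 2) / ((1 + y) * (y - log (1 + y))) ^ 2) y := by
    intro y (hy : 0 < y)
    have hden :=
      ((hasDerivAt_id' y).const_add 1).fun_mul (hasDerivAt_sub_log_one_add (by linarith))
    refine ((hasDerivAt_pow 2 y).fun_div hden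
      (mul_pos (by linarith) (sub_log_one_add_pos (by linarith) hy.ne')).ne').congr_deriv ?_
    field_simp
    ring
  refine antitoneOn_of_hasDerivWithinAt_nonpos (convex_Ioi 0)
    (fun y hy => (hderiv y hy).continuousAt.continuousWithinAt)
    (fun y hy => (hderiv y (interior_subset hy)).hasDerivWithinAt) fun y hy => ?_
  rw [interior_Ioi] at hy
  have hy : 0 < y := hy
  have hlog := le_log_one_add_of_nonneg hy.le
  rw [div_le_iff₀ (by linarith)] at hlog
  refine div_nonpos_of_nonpos_of_nonneg (mul_nonpos_of_nonneg_of_nonpos hy.le ?_) (sq_nonneg _)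
  linarith

lemma antitoneOn_sub_log_one_add_div_rpow {q s : ℝ} (hs : 0 < s) (hq : q = beta s) :
    AntitoneOn (fun y => (y - log (1 + y)) / y ^ q) (Set.Ici s) := by
  have hderiv : ∀ y ∈ Set.Ici s, HasDerivAt (fun y => (y - log (1 + y)) / y ^ q)
      (y ^ (q - 1) * (y / (1 + y) * y - q * (y - log (1 + y))) / (y ^ q) ^ 2) y := by
    intro y (hy : s ≤ y)
    have hy0 : 0 < y := hs.trans_le hy
    refine ((hasDerivAt_sub_log_one_add (by linarith)).fun_div
      (hasDerivAt_rpow_const (Or.inl hy0.ne')) (rpow_pos_of_pos hy0 q).ne').congr_deriv ?_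
    rw [rpow_sub_one hy0.ne']
    field_simp
  refine antitoneOn_of_hasDerivWithinAt_nonpos (convex_Ici s)
    (fun y hy => (hderiv y hy).continuousAt.continuousWithinAt)
    (fun y hy => (hderiv y (interior_subset hy)).hasDerivWithinAt) fun y hy => ?_
  rw [interior_Ici] at hy
  have hy : s < y := hy
  have hy0 : 0 < y := hs.trans hy
  have hu : 0 < (1 + y) * (y - log (1 + y)) :=
    mul_pos (by linarith) (sub_log_one_add_pos (by linarith) hy0.ne')
  have hbeta : y ^ 2 ≤ q * ((1 + y) * (y - log (1 + y))) := by
    rw [← div_le_iff₀ hu]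
    exact hq ▸ antitoneOn_beta hs (hs.trans hy) hy.le
  refine div_nonpos_of_nonpos_of_nonneg
    (mul_nonpos_of_nonneg_of_nonpos (by positivity) ?_) (sq_nonneg _)
  rw [sub_nonpos, div_mul_eq_mul_div, div_le_iff₀ (by linarith)]
  linarith

lemma sub_log_one_add_le_rpow_mul_rpow {q s y : ℝ} (hq : q ≤ 2) (hs : 0 < s) (hqs : q = beta s)
    (hy : 0 ≤ y) : y - log (1 + y) ≤ s ^ (2 - q) * y ^ q := by
  have hsplit {r : ℝ} (hr : 0 ≤ r) : r ^ 2 = r ^ (2 - q) * r ^ q := by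
    rw [← rpow_add' hr (by norm_num), sub_add_cancel, rpow_two]
  rcases le_total y s with hys | hsy
  · calc y - log (1 + y) ≤ y ^ 2 := sub_log_one_add_le_sq hy
      _ = y ^ (2 - q) * y ^ q := hsplit hy
      _ ≤ s ^ (2 - q) * y ^ q := by gcongr
  · have hdecr := antitoneOn_sub_log_one_add_div_rpow hs hqs (Set.mem_Ici.2 le_rfl) hsy hsy
    have hs' : (s - log (1 + s)) / s ^ q ≤ s ^ (2 - q) := by
      rw [div_le_iff₀ (by positivity), ← hsplit hs.le]
      exact sub_log_one_add_le_sq hs.le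
    have := hdecr.trans hs'
    rwa [div_le_iff₀ (rpow_pos_of_pos (hs.trans_le hsy) q)] at this

/-- **q-growth lemma.** Fix `q ∈ (1,2]`; for `q < 2` let `x*(q) > 0` be the unique positive
solution of `q = x²/((1+x)(x − log(1+x)))` and `c*(q) = x*(q)^(2−q)`; set `c*(2) = 1`.
Then for every admissible bet `l` (i.e. `l ∈ [0,1)` with `−l − log(1−l) ≤ l²`) and every
`x ≥ −1`:  `l x − log(1 + l x) ≤ l^q (1_{x≤0} x² + 1_{x>0} min(x², c*(q) x^q))`. -/
theorem q_growth
    (q : ℝ) (hq : q ∈ Set.Ioc (1 : ℝ) 2)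
    (xstar cstar : ℝ)
    (hxstar : q < 2 →
      0 < xstar ∧
      q = xstar ^ 2 / ((1 + xstar) * (xstar - Real.log (1 + xstar))) ∧
      cstar = xstar ^ (2 - q))
    (hcstar2 : q = 2 → cstar = 1)
    (l : ℝ) (hl : l ∈ Set.Ico (0 : ℝ) 1) (hladm : -l - Real.log (1 - l) ≤ l ^ 2)
    (x : ℝ) (hx : -1 ≤ x) :
    l * x - Real.log (1 + l * x) ≤
      l ^ q * (if x ≤ 0 then x ^ 2 else min (x ^ 2) (cstar * x ^ q)) := by
  obtain ⟨hq1, hq2⟩ := hq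
  have hlq : l ^ 2 ≤ l ^ q := by
    simpa using rpow_le_rpow_of_exponent_ge' hl.1 hl.2.le (by linarith) hq2
  have hsq : l * x - log (1 + l * x) ≤ l ^ q * x ^ 2 :=
    (mul_sub_log_one_add_mul_le_sq_mul_sq hl hladm hx).trans (by gcongr)
  split_ifs with hx0
  · exact hsq
  rw [mul_min_of_nonneg _ _ (rpow_nonneg hl.1 q)]
  refine le_min hsq ?_
  rcases hq2.lt_or_eq with hq2 | rfl
  · obtain ⟨hs, hqs, rfl⟩ := hxstar hq2
    calc _ ≤ xstar ^ (2 - q) * (l * x) ^ q :=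
          sub_log_one_add_le_rpow_mul_rpow hq2.le hs hqs (mul_nonneg hl.1 (by linarith))
      _ = _ := by rw [mul_rpow hl.1 (by linarith)]; ring
  · rwa [hcstar2 rfl, one_mul, rpow_two x]
end

section
/- The function β(x) ≐ x²/((1+x)(x − log(1+x))) is strictly decreasing on (0, ∞), with lim_{x→0⁺} β(x) = 2 and lim_{x→∞} β(x) = 1. Consequently, for every q ∈ (1,2) there is a unique x*(q) > 0 with β(x*(q)) = q. -/
/-! The reciprocal `1/β(x) = (1+x)(x - log(1+x))/x²` has derivative
`((x+2) log(1+x) - 2x)/x³`, which is positive by the classical bound `2x/(x+2) < log(1+x)`.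
The limits come from `log(1+x) = x - x²/2 + O(x³)` at `0` and `log(1+x) = o(x)` at `∞`;
the root then exists by the intermediate value theorem and is unique by strict monotonicity. -/

open Real Filter Topology Set Asymptotics

noncomputable def betaRecip (x : ℝ) : ℝ := (1 + x) * (x - log (1 + x)) / x ^ 2

lemma log_one_add_lt_self {x : ℝ} (hx₀ : x ≠ 0) (hx : -1 < x) : log (1 + x) < x := by
  rw [log_lt_iff_lt_exp (by linarith)]
  linarith [add_one_lt_exp hx₀]

lemma betaRecip_pos {x : ℝ} (hx : 0 < x) : 0 < betaRecip x := by
  have := log_one_add_lt_self hx.ne' (by linarith)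
  unfold betaRecip
  positivity

lemma hasDerivAt_betaRecip {x : ℝ} (hx₀ : x ≠ 0) (hx : 1 + x ≠ 0) :
    HasDerivAt betaRecip (((x + 2) * log (1 + x) - 2 * x) / x ^ 3) x := by
  have hlog : HasDerivAt (fun y => log (1 + y)) (1 + x)⁻¹ x := by
    simpa using ((hasDerivAt_id x).const_add 1).log hx
  have hnum := ((hasDerivAt_id' x).const_add 1).mul ((hasDerivAt_id' x).sub hlog)
  refine (hnum.div (hasDerivAt_pow 2 x) (pow_ne_zero 2 hx₀)).congr_deriv ?_
  simp only [Pi.mul_apply, Pi.sub_apply]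
  field_simp
  ring

lemma continuousOn_betaRecip : ContinuousOn betaRecip (Ioi 0) := fun x hx =>
  (hasDerivAt_betaRecip (ne_of_gt hx) (by linarith [mem_Ioi.1 hx])).continuousAt
    |>.continuousWithinAt

lemma strictMonoOn_betaRecip : StrictMonoOn betaRecip (Ioi 0) := by
  refine strictMonoOn_of_deriv_pos (convex_Ioi 0) continuousOn_betaRecip fun x hx => ?_
  rw [interior_Ioi, mem_Ioi] at hx
  rw [(hasDerivAt_betaRecip hx.ne' (by linarith)).deriv]
  have key := lt_log_one_add_of_pos hx
  rw [div_lt_iff₀ (by linarith)] at key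
  exact div_pos (by nlinarith) (by positivity)

lemma abs_sub_log_one_add_div_sq_sub_half_le {x : ℝ} (hx₀ : x ≠ 0) (hx : |x| < 1) :
    |(x - log (1 + x)) / x ^ 2 - 1 / 2| ≤ |x| / (1 - |x|) := by
  have h := abs_log_sub_add_sum_range_le (x := -x) (by rwa [abs_neg]) 2
  norm_num [Finset.sum_range_succ] at h
  have hx2 : 0 < |x| ^ 2 := by positivity
  have heq : (x - log (1 + x)) / x ^ 2 - 1 / 2 =
      -((-x + x ^ 2 / 2 + log (1 + x)) / x ^ 2) := by
    field_simp
    ring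
  rw [heq, abs_neg, abs_div, abs_pow, div_le_iff₀ hx2]
  calc _ ≤ |x| ^ 3 / (1 - |x|) := h
    _ = _ := by ring

lemma tendsto_betaRecip_nhdsNE_zero : Tendsto betaRecip (𝓝[≠] 0) (𝓝 (1 / 2)) := by
  have hbound : Tendsto (fun x : ℝ => |x| / (1 - |x|)) (𝓝[≠] 0) (𝓝 0) := by
    have hcont : ContinuousAt (fun x : ℝ => |x| / (1 - |x|)) 0 :=
      continuous_abs.continuousAt.div (continuous_const.sub continuous_abs).continuousAt (by simp)
    simpa using hcont.tendsto.mono_left nhdsWithin_le_nhds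
  have hquot : Tendsto (fun x => (x - log (1 + x)) / x ^ 2) (𝓝[≠] 0) (𝓝 (1 / 2)) := by
    rw [tendsto_iff_norm_sub_tendsto_zero]
    refine squeeze_zero' (Eventually.of_forall fun _ => norm_nonneg _) ?_ hbound
    have hsmall : ∀ᶠ x in 𝓝[≠] (0 : ℝ), |x| < 1 :=
      nhdsWithin_le_nhds ((isOpen_lt continuous_abs continuous_const).mem_nhds (by simp))
    filter_upwards [self_mem_nhdsWithin, hsmall] with x hx₀ hx
    exact abs_sub_log_one_add_div_sq_sub_half_le hx₀ hx
  have hlin : Tendsto (fun x : ℝ => 1 + x) (𝓝[≠] 0) (𝓝 1) :=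
    ((continuous_const_add 1).tendsto' 0 1 (add_zero 1)).mono_left nhdsWithin_le_nhds
  have := hlin.mul hquot
  rw [one_mul] at this
  exact this.congr fun x => (mul_div_assoc _ _ _).symm

lemma tendsto_betaRecip_atTop : Tendsto betaRecip atTop (𝓝 1) := by
  have hlin : (fun x : ℝ => 1 + x) ~[atTop] id :=
    IsLittleO.isEquivalent ((isLittleO_const_id_atTop (1 : ℝ)).congr_left fun x => by simp)
  have hlog : (fun x : ℝ => log (1 + x)) =o[atTop] id :=
    (isLittleO_log_id_atTop.comp_tendsto (tendsto_atTop_add_const_left _ 1 tendsto_id)).trans_isBigO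
      hlin.isBigO
  have hsub : (fun x : ℝ => x - log (1 + x)) ~[atTop] id :=
    IsLittleO.isEquivalent (hlog.neg_left.congr_left fun x => by simp)
  have hnum := (isEquivalent_iff_tendsto_one ?_).1 (hlin.mul hsub)
  · refine hnum.congr fun x => ?_
    simp [betaRecip, sq]
  · filter_upwards [eventually_ne_atTop 0] with x hx
    simpa using hx

lemma existsUnique_eq_of_strictAntiOn_of_tendsto {f : ℝ → ℝ} {a l m q : ℝ}
    (hf : StrictAntiOn f (Ioi a)) (hcont : ContinuousOn f (Ioi a))
    (hl : Tendsto f (𝓝[>] a) (𝓝 l)) (hm : Tendsto f atTop (𝓝 m)) (hq : q ∈ Ioo m l) :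
    ∃! x, a < x ∧ f x = q := by
  obtain ⟨b, hab, hbq⟩ :=
    (eventually_mem_nhdsWithin.and (hl.eventually (eventually_gt_nhds hq.2))).exists
  obtain ⟨c, hbc, hcq⟩ :=
    ((eventually_gt_atTop b).and (hm.eventually (eventually_lt_nhds hq.1))).exists
  have hsub : Icc b c ⊆ Ioi a := Icc_subset_Ioi_iff hbc.le |>.2 hab
  obtain ⟨x, hx, rfl⟩ := intermediate_value_Icc' hbc.le (hcont.mono hsub) ⟨hcq.le, hbq.le⟩
  exact ⟨x, ⟨hsub hx, rfl⟩, fun y hy => hf.injOn hy.1 (hsub hx) hy.2⟩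

/-- **Monotonicity and limits of β.** The function `β(x) = x²/((1+x)(x − log(1+x)))` is
strictly decreasing on `(0, ∞)`, tends to `2` as `x → 0⁺` and to `1` as `x → ∞`;
consequently for every `q ∈ (1,2)` there is a unique `x > 0` with `β(x) = q`. -/
theorem beta_strict_anti_limits_unique_root
    (β : ℝ → ℝ)
    (hβ : ∀ x, β x = x ^ 2 / ((1 + x) * (x - Real.log (1 + x)))) :
    StrictAntiOn β (Set.Ioi 0) ∧
    Tendsto β (nhdsWithin 0 (Set.Ioi 0)) (nhds 2) ∧
    Tendsto β atTop (nhds 1) ∧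
    ∀ q ∈ Set.Ioo (1 : ℝ) 2, ∃! x : ℝ, 0 < x ∧ β x = q := by
  obtain rfl : β = fun x => (betaRecip x)⁻¹ := funext fun x => by rw [hβ, betaRecip, inv_div]
  have hanti : StrictAntiOn (fun x => (betaRecip x)⁻¹) (Ioi 0) := fun x hx y hy hxy =>
    inv_strictAnti₀ (betaRecip_pos hx) (strictMonoOn_betaRecip hx hy hxy)
  have hzero : Tendsto (fun x => (betaRecip x)⁻¹) (𝓝[>] 0) (𝓝 2) := by
    simpa using (tendsto_betaRecip_nhdsNE_zero.mono_left (nhdsGT_le_nhdsNE 0)).inv₀ (by norm_num)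
  have htop : Tendsto (fun x => (betaRecip x)⁻¹) atTop (𝓝 1) := by
    simpa using tendsto_betaRecip_atTop.inv₀ one_ne_zero
  have hcont : ContinuousOn (fun x => (betaRecip x)⁻¹) (Ioi 0) :=
    continuousOn_betaRecip.inv₀ fun x hx => (betaRecip_pos hx).ne'
  exact ⟨hanti, hzero, htop, fun q hq =>
    existsUnique_eq_of_strictAntiOn_of_tendsto hanti hcont hzero htop hq⟩
end

section
/- (Reduction of the data boundary to the v-boundary via q-growth.) Fix q ∈ (1,2], α ∈ (0,1), and λ_max ∈ (0,1) with −λ_max − log(1−λ_max) ≤ λ_max². Let F be a Borel probability measure on [0, λ_max], and let (d_s)_{s≥1} be real numbers with d_s ≥ −1. For t ≥ 1 define v_t ≐ Σ_{s≤t} [ 1_{d_s ≤ 0} d_s² + 1_{d_s > 0} min(d_s², c*(q) d_s^q) ]. Then sup{ y ∈ ℝ : ∫ exp(λy − Σ_{s≤t} g(λ, d_s)) dF(λ) ≤ 1/α } ≤ sup{ y ∈ ℝ : ∫ exp(λy − λ^q v_t) dF(λ) ≤ 1/α }. -/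
/-!
Write `ψ u = u - log (1 + u)`, so that `g(λ, x) = ψ (λ x)`. For `λ ∈ [0, λ_max]` and `x ≥ -1`
the q-growth bound `ψ (λ x) ≤ λ^q (1_{x≤0} x² + 1_{x>0} min (x², c* x^q))` holds termwise, hence
the integrand of the first set dominates that of the second and the first set is contained in
the second.

For `u ∈ [-λ_max, 0]`, `u² - ψ u` increases up to `-1/2` and decreases after it, and it is
nonnegative at both ends by admissibility of `λ_max`. For `u ≥ 0`, `log (1 + u) ≥ 2u / (2 + u)`
gives `(2 + u) ψ u ≤ u²`, which makes `(1 + u) ψ u / u²` increasing; by the defining equation of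
`x*` this means `log ψ u - q log u` decreases on `[x*, ∞)`, so there `ψ u / u^q ≤ ψ x* / x*^q ≤ c*`,
while on `[0, x*]` simply `ψ u ≤ u² ≤ x*^(2-q) u^q`.

Comparing suprema needs the second set to be bounded above. It is, unless `F` is the point mass
at `0`, and in that case both sets are all of `ℝ`.
-/

open Real MeasureTheory Finset

namespace QGrowth

noncomputable def psi (u : ℝ) : ℝ := u - log (1 + u)

lemma hasDerivAt_psi {u : ℝ} (hu : -1 < u) : HasDerivAt psi (u / (1 + u)) u := by
  have h1u : 1 + u ≠ 0 := by linarith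
  refine ((hasDerivAt_id' u).sub (((hasDerivAt_id' u).const_add 1).log h1u)).congr_deriv ?_
  field_simp
  ring

lemma psi_nonneg {u : ℝ} (hu : -1 < u) : 0 ≤ psi u := by
  have := log_le_sub_one_of_pos (by linarith : 0 < 1 + u)
  unfold psi; linarith

lemma psi_pos {u : ℝ} (hu : 0 < u) : 0 < psi u := by
  have := log_lt_sub_one_of_pos (by linarith : 0 < 1 + u) (by linarith)
  unfold psi; linarith

lemma two_add_mul_psi_le_sq {u : ℝ} (hu : 0 ≤ u) : (2 + u) * psi u ≤ u ^ 2 := by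
  have h := le_log_one_add_of_nonneg hu
  rw [div_le_iff₀ (by linarith)] at h
  unfold psi; nlinarith

lemma psi_le_sq {u : ℝ} (hu : 0 ≤ u) : psi u ≤ u ^ 2 := by
  nlinarith [two_add_mul_psi_le_sq hu, psi_nonneg (by linarith : -1 < u)]

lemma hasDerivAt_sq_sub_psi {x : ℝ} (hx : -1 < x) :
    HasDerivAt (fun x => x ^ 2 - psi x) (x * (2 * x + 1) / (1 + x)) x := by
  refine ((hasDerivAt_pow 2 x).sub (hasDerivAt_psi hx)).congr_deriv ?_
  field_simp [(by linarith : 1 + x ≠ 0)]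
  ring

lemma antitoneOn_sq_sub_psi : AntitoneOn (fun x => x ^ 2 - psi x) (Set.Icc (-1 / 2) 0) := by
  refine antitoneOn_of_hasDerivWithinAt_nonpos (convex_Icc _ _)
    (f' := fun x => x * (2 * x + 1) / (1 + x))
    (fun x hx => (hasDerivAt_sq_sub_psi (by linarith [hx.1])).continuousAt.continuousWithinAt)
    (fun x hx => ?_) fun x hx => ?_
  all_goals rw [interior_Icc] at hx; obtain ⟨hx1, hx2⟩ := hx
  · exact (hasDerivAt_sq_sub_psi (by linarith)).hasDerivWithinAt
  · exact div_nonpos_of_nonpos_of_nonneg (by nlinarith) (by linarith)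

lemma monotoneOn_sq_sub_psi : MonotoneOn (fun x => x ^ 2 - psi x) (Set.Ioc (-1) (-1 / 2)) := by
  refine monotoneOn_of_hasDerivWithinAt_nonneg (convex_Ioc _ _)
    (f' := fun x => x * (2 * x + 1) / (1 + x))
    (fun x hx => (hasDerivAt_sq_sub_psi hx.1).continuousAt.continuousWithinAt)
    (fun x hx => ?_) fun x hx => ?_
  all_goals rw [interior_Ioc] at hx; obtain ⟨hx1, hx2⟩ := hx
  · exact (hasDerivAt_sq_sub_psi hx1).hasDerivWithinAt
  · exact div_nonneg (by nlinarith) (by linarith)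

lemma psi_le_sq_of_mem_Icc {a u : ℝ} (ha : -1 < a) (hpa : psi a ≤ a ^ 2)
    (hu : u ∈ Set.Icc a 0) : psi u ≤ u ^ 2 := by
  rcases le_or_gt (-1 / 2) u with hu2 | hu2
  · have := antitoneOn_sq_sub_psi ⟨hu2, hu.2⟩ ⟨by norm_num, le_rfl⟩ hu.2
    simpa [psi] using this
  · have := monotoneOn_sq_sub_psi ⟨ha, by linarith [hu.1]⟩ ⟨by linarith [hu.1], hu2.le⟩ hu.1
    simp only at this
    linarith

lemma monotoneOn_one_add_mul_psi_div_sq :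
    MonotoneOn (fun u => (1 + u) * psi u / u ^ 2) (Set.Ioi 0) := by
  have hd : ∀ u, 0 < u → HasDerivAt (fun u => (1 + u) * psi u / u ^ 2)
      ((u ^ 2 - (2 + u) * psi u) / u ^ 3) u := by
    intro u hu
    refine ((((hasDerivAt_id' u).const_add 1).mul (hasDerivAt_psi (by linarith))).div
      (hasDerivAt_pow 2 u) (by positivity)).congr_deriv ?_
    simp only [Pi.mul_apply]
    field_simp [(by linarith : 1 + u ≠ 0)]
    ring
  refine monotoneOn_of_hasDerivWithinAt_nonneg (convex_Ioi 0)
    (fun u hu => (hd u hu).continuousAt.continuousWithinAt)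
    (fun u hu => (hd u (by rwa [interior_Ioi] at hu)).hasDerivWithinAt) fun u hu => ?_
  rw [interior_Ioi] at hu
  exact div_nonneg (sub_nonneg.2 (two_add_mul_psi_le_sq (le_of_lt hu))) (pow_pos hu 3).le

lemma sq_le_mul_one_add_mul_psi {q x u : ℝ} (hx : 0 < x) (hq : q = x ^ 2 / ((1 + x) * psi x))
    (hxu : x ≤ u) : u ^ 2 ≤ q * ((1 + u) * psi u) := by
  have hu : 0 < u := hx.trans_le hxu
  have hk := monotoneOn_one_add_mul_psi_div_sq hx hu hxu
  have hpx : 0 < (1 + x) * psi x := mul_pos (by linarith) (psi_pos hx)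
  rw [div_le_div_iff₀ (by positivity) (by positivity)] at hk
  rw [hq, div_mul_eq_mul_div, le_div_iff₀ hpx]
  linarith

lemma antitoneOn_log_psi_sub_mul_log {q x : ℝ} (hx : 0 < x)
    (hq : q = x ^ 2 / ((1 + x) * psi x)) :
    AntitoneOn (fun u => log (psi u) - q * log u) (Set.Ici x) := by
  have hd : ∀ u, 0 < u → HasDerivAt (fun u => log (psi u) - q * log u)
      (u / (1 + u) / psi u - q * u⁻¹) u := fun u hu =>
    ((hasDerivAt_psi (by linarith)).log (psi_pos hu).ne').sub
      ((hasDerivAt_log hu.ne').const_mul q)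
  refine antitoneOn_of_hasDerivWithinAt_nonpos (convex_Ici x)
    (fun u hu => (hd u (hx.trans_le hu)).continuousAt.continuousWithinAt)
    (fun u hu => (hd u ?_).hasDerivWithinAt) fun u hu => ?_
  all_goals rw [interior_Ici] at hu; have hu0 : 0 < u := hx.trans hu
  · exact hu0
  · have h := sq_le_mul_one_add_mul_psi hx hq hu.le
    have hp : 0 < psi u := psi_pos hu0
    rw [sub_nonpos, div_div, ← div_eq_mul_inv, div_le_div_iff₀ (by positivity) hu0]
    linarith

lemma psi_le_rpow_mul_rpow {q x u : ℝ} (hq2 : q ≤ 2) (hx : 0 < x)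
    (hq : q = x ^ 2 / ((1 + x) * psi x)) (hu : 0 ≤ u) : psi u ≤ x ^ (2 - q) * u ^ q := by
  rcases le_total u x with hux | hxu
  · calc psi u ≤ u ^ 2 := psi_le_sq hu
      _ = u ^ (2 - q) * u ^ q := by
        rw [← rpow_add' hu (by norm_num), sub_add_cancel, rpow_two]
      _ ≤ x ^ (2 - q) * u ^ q := by gcongr
  · have hu0 : 0 < u := hx.trans_le hxu
    have hlog := antitoneOn_log_psi_sub_mul_log hx hq Set.self_mem_Ici hxu hxu
    have hpx := log_le_log (psi_pos hx) (psi_le_sq hx.le)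
    rw [log_pow, Nat.cast_ofNat] at hpx
    rw [← exp_log (psi_pos hu0), rpow_def_of_pos hx, rpow_def_of_pos hu0, ← exp_add]
    gcongr
    simp only at hlog
    linarith

lemma psi_mul_le_rpow_mul {q b c l x : ℝ} (hq0 : 0 ≤ q) (hq2 : q ≤ 2) (hb1 : b < 1)
    (hb : psi (-b) ≤ b ^ 2) (hc : ∀ u, 0 ≤ u → psi u ≤ c * u ^ q) (hl : l ∈ Set.Icc 0 b)
    (hx : -1 ≤ x) :
    psi (l * x) ≤ l ^ q * (if x ≤ 0 then x ^ 2 else min (x ^ 2) (c * x ^ q)) := by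
  have hsq : (l * x) ^ 2 ≤ l ^ q * x ^ 2 := by
    rw [mul_pow, ← rpow_two]
    exact mul_le_mul_of_nonneg_right
      (rpow_le_rpow_of_exponent_ge' hl.1 (by linarith [hl.2]) hq0 hq2) (sq_nonneg x)
  split_ifs with hx0
  · refine (psi_le_sq_of_mem_Icc (a := -b) (by linarith) (by rwa [neg_sq]) ⟨?_, ?_⟩).trans hsq
    · nlinarith [mul_nonneg hl.1 (by linarith : 0 ≤ x + 1), hl.2]
    · exact mul_nonpos_of_nonneg_of_nonpos hl.1 hx0
  · rw [not_le] at hx0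
    rw [mul_min_of_nonneg _ _ (rpow_nonneg hl.1 q)]
    refine le_min ((psi_le_sq (mul_nonneg hl.1 hx0.le)).trans hsq) ?_
    calc psi (l * x) ≤ c * (l * x) ^ q := hc _ (mul_nonneg hl.1 hx0.le)
      _ = l ^ q * (c * x ^ q) := by rw [mul_rpow hl.1 hx0.le]; ring

section Boundary

variable {F : Measure ℝ} {b c : ℝ} {h h₁ h₂ : ℝ → ℝ}

def boundarySet (F : Measure ℝ) (h : ℝ → ℝ) (c : ℝ) : Set ℝ :=
  {y | ∫ l, exp (l * y - h l) ∂F ≤ c}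

lemma integrable_exp_mul_sub [IsFiniteMeasure F] (hF : ∀ᵐ l ∂F, l ∈ Set.Icc 0 b)
    (hm : Measurable h) (h0 : ∀ l ∈ Set.Icc 0 b, 0 ≤ h l) (y : ℝ) :
    Integrable (fun l => exp (l * y - h l)) F := by
  refine .of_bound (by fun_prop) (exp (b * |y|)) ?_
  filter_upwards [hF] with l hl
  rw [norm_of_nonneg (exp_pos _).le]
  gcongr
  calc l * y - h l ≤ l * |y| := by nlinarith [le_abs_self y, hl.1, h0 l hl]
    _ ≤ b * |y| := mul_le_mul_of_nonneg_right hl.2 (abs_nonneg y)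

lemma integral_exp_mul_sub_le_one [IsProbabilityMeasure F] {y : ℝ}
    (hy : ∀ᵐ l ∂F, l * y - h l ≤ 0) : ∫ l, exp (l * y - h l) ∂F ≤ 1 := by
  have hbound : ∀ᵐ l ∂F, ‖exp (l * y - h l)‖ ≤ 1 := hy.mono fun l hl => by
    rw [norm_of_nonneg (exp_pos _).le]
    exact exp_le_one_iff.2 hl
  simpa using (le_abs_self _).trans (norm_integral_le_of_norm_le_const hbound)

lemma zero_mem_boundarySet [IsProbabilityMeasure F] (hF : ∀ᵐ l ∂F, l ∈ Set.Icc 0 b)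
    (h0 : ∀ l ∈ Set.Icc 0 b, 0 ≤ h l) (hc : 1 ≤ c) : 0 ∈ boundarySet F h c := by
  refine (integral_exp_mul_sub_le_one ?_).trans hc
  filter_upwards [hF] with l hl
  simpa using h0 l hl

lemma boundarySet_eq_univ [IsProbabilityMeasure F] (hF : ∀ᵐ l ∂F, l ∈ Set.Icc 0 b)
    (h0 : ∀ l ∈ Set.Icc 0 b, 0 ≤ h l) (hc : 1 ≤ c) (hF0 : F (Set.Ioi 0) = 0) :
    boundarySet F h c = Set.univ := by
  refine Set.eq_univ_of_forall fun y => (integral_exp_mul_sub_le_one ?_).trans hc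
  filter_upwards [hF, measure_eq_zero_iff_ae_notMem.mp hF0] with l hl hl0
  obtain rfl : l = 0 := le_antisymm (not_lt.mp hl0) hl.1
  simpa using h0 0 hl

lemma boundarySet_subset [IsFiniteMeasure F] (hF : ∀ᵐ l ∂F, l ∈ Set.Icc 0 b)
    (hm₁ : Measurable h₁) (h₁0 : ∀ l ∈ Set.Icc 0 b, 0 ≤ h₁ l)
    (h₁₂ : ∀ l ∈ Set.Icc 0 b, h₁ l ≤ h₂ l) : boundarySet F h₁ c ⊆ boundarySet F h₂ c := by
  intro y hy
  refine le_trans (integral_mono_of_nonneg (ae_of_all _ fun l => (exp_pos _).le)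
    (integrable_exp_mul_sub hF hm₁ h₁0 y) ?_) hy
  filter_upwards [hF] with l hl
  gcongr
  exact h₁₂ l hl

lemma exists_pos_measure_Ici_ne_zero {μ : Measure ℝ} (h : μ (Set.Ioi 0) ≠ 0) :
    ∃ ε > 0, μ (Set.Ici ε) ≠ 0 := by
  by_contra! H
  refine h (measure_mono_null (fun l hl => ?_)
    (measure_iUnion_null fun n : ℕ => H (1 / (n + 1)) (by positivity)))
  obtain ⟨n, hn⟩ := exists_nat_one_div_lt (Set.mem_Ioi.mp hl)
  exact Set.mem_iUnion.2 ⟨n, hn.le⟩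

lemma bddAbove_boundarySet [IsFiniteMeasure F] (hF : ∀ᵐ l ∂F, l ∈ Set.Icc 0 b)
    (hm : Measurable h) (h0 : ∀ l ∈ Set.Icc 0 b, 0 ≤ h l) {C : ℝ}
    (hC : ∀ l ∈ Set.Icc 0 b, h l ≤ C) {ε : ℝ} (hε : 0 < ε) (hFε : F (Set.Ici ε) ≠ 0) :
    BddAbove (boundarySet F h c) := by
  set m := F.real (Set.Ici ε)
  have hm0 : 0 < m := ENNReal.toReal_pos hFε (measure_ne_top _ _)
  refine ⟨max 0 ((c / m + C) / ε), fun y hy => ?_⟩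
  rcases le_or_gt y 0 with hy0 | hy0
  · exact hy0.trans (le_max_left _ _)
  have hlow : m * exp (ε * y - C) ≤ c := calc
    m * exp (ε * y - C) = ∫ l, (Set.Ici ε).indicator (fun _ => exp (ε * y - C)) l ∂F := by
      rw [integral_indicator_const _ measurableSet_Ici, smul_eq_mul]
    _ ≤ ∫ l, exp (l * y - h l) ∂F := by
      refine integral_mono_of_nonneg
        (ae_of_all _ (Set.indicator_nonneg fun _ _ => (exp_pos _).le))
        (integrable_exp_mul_sub hF hm h0 y) ?_
      filter_upwards [hF] with l hl
      by_cases hlε : l ∈ Set.Ici ε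
      · rw [Set.indicator_of_mem hlε]
        gcongr
        · exact hlε
        · exact hC l hl
      · rw [Set.indicator_of_notMem hlε]
        exact (exp_pos _).le
    _ ≤ c := hy
  have hlin : (ε * y - C) * m ≤ c := by
    nlinarith [add_one_le_exp (ε * y - C), mul_le_mul_of_nonneg_left
      (add_one_le_exp (ε * y - C)) hm0.le]
  refine le_max_of_le_right ?_
  rw [le_div_iff₀ hε]
  have := (le_div_iff₀ hm0).2 hlin
  linarith

theorem sSup_boundarySet_le [IsProbabilityMeasure F] (hF : ∀ᵐ l ∂F, l ∈ Set.Icc 0 b)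
    (hm₁ : Measurable h₁) (hm₂ : Measurable h₂) (h₁0 : ∀ l ∈ Set.Icc 0 b, 0 ≤ h₁ l)
    (h₁₂ : ∀ l ∈ Set.Icc 0 b, h₁ l ≤ h₂ l) {C : ℝ} (hC : ∀ l ∈ Set.Icc 0 b, h₂ l ≤ C)
    (hc : 1 ≤ c) : sSup (boundarySet F h₁ c) ≤ sSup (boundarySet F h₂ c) := by
  have h₂0 : ∀ l ∈ Set.Icc 0 b, 0 ≤ h₂ l := fun l hl => (h₁0 l hl).trans (h₁₂ l hl)
  by_cases hF0 : F (Set.Ioi 0) = 0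
  · rw [boundarySet_eq_univ hF h₁0 hc hF0, boundarySet_eq_univ hF h₂0 hc hF0]
  obtain ⟨ε, hε, hFε⟩ := exists_pos_measure_Ici_ne_zero hF0
  exact csSup_le_csSup (bddAbove_boundarySet hF hm₂ h₂0 hC hε hFε)
    ⟨0, zero_mem_boundarySet hF h₁0 hc⟩ (boundarySet_subset hF hm₁ h₁0 h₁₂)

end Boundary

end QGrowth

open QGrowth

theorem boundary_reduction_via_q_growth_general
    (q α lmax : ℝ) (hq : q ∈ Set.Ioc (1 : ℝ) 2) (hα : α ∈ Set.Ioo (0 : ℝ) 1)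
    (hlmax : lmax ∈ Set.Ioo (0 : ℝ) 1)
    (hladm : -lmax - Real.log (1 - lmax) ≤ lmax ^ 2)
    (F : Measure ℝ) [IsProbabilityMeasure F] (hF_supp : F (Set.Icc 0 lmax)ᶜ = 0)
    (xstar cstar : ℝ)
    (hxstar : q < 2 →
      0 < xstar ∧
      q = xstar ^ 2 / ((1 + xstar) * (xstar - Real.log (1 + xstar))) ∧
      cstar = xstar ^ (2 - q))
    (hcstar2 : q = 2 → cstar = 1)
    (d : ℕ → ℝ) (hd : ∀ s, -1 ≤ d s)
    (v : ℕ → ℝ)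
    (hv : ∀ t, v t = ∑ s ∈ Finset.Icc 1 t,
      (if d s ≤ 0 then d s ^ 2 else min (d s ^ 2) (cstar * d s ^ q)))
    (t : ℕ) :
    sSup {y : ℝ |
        (∫ l, Real.exp (l * y
          - ∑ s ∈ Finset.Icc 1 t, (l * d s - Real.log (1 + l * d s))) ∂F) ≤ 1 / α} ≤
      sSup {y : ℝ | (∫ l, Real.exp (l * y - l ^ q * v t) ∂F) ≤ 1 / α} := by
  have hc : ∀ u, 0 ≤ u → psi u ≤ cstar * u ^ q := by
    intro u hu
    rcases hq.2.lt_or_eq with hq2 | hq2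
    · obtain ⟨hx, hqx, rfl⟩ := hxstar hq2
      exact psi_le_rpow_mul_rpow hq.2 hx hqx hu
    · rw [hcstar2 hq2, one_mul, hq2, rpow_two]
      exact psi_le_sq hu
  have hb : psi (-lmax) ≤ lmax ^ 2 := by
    simpa [psi, sub_eq_add_neg] using hladm
  have hterm : ∀ l ∈ Set.Icc 0 lmax,
      ∑ s ∈ Finset.Icc 1 t, psi (l * d s) ≤ l ^ q * v t := fun l hl => by
    rw [hv, mul_sum]
    exact sum_le_sum fun s _ =>
      psi_mul_le_rpow_mul (by linarith [hq.1]) hq.2 hlmax.2 hb hc hl (hd s)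
  refine sSup_boundarySet_le (ae_iff.2 hF_supp) (by fun_prop) (by fun_prop)
    (fun l hl => sum_nonneg fun s _ => psi_nonneg ?_) hterm (C := |v t|) ?_ ?_
  · nlinarith [mul_nonneg hl.1 (by linarith [hd s] : 0 ≤ 1 + d s), hl.2, hlmax.2]
  · intro l hl
    have hlq : l ^ q ≤ 1 := rpow_le_one hl.1 (by linarith [hl.2, hlmax.2]) (by linarith [hq.1])
    nlinarith [mul_le_mul_of_nonneg_left (le_abs_self (v t)) (rpow_nonneg hl.1 q),
      mul_le_mul_of_nonneg_right hlq (abs_nonneg (v t))]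
  · rw [le_div_iff₀ hα.1]
    linarith [hα.2]

/-- **Reduction of the data boundary to the v-boundary via q-growth.**
Fix `q ∈ (1,2]`, `α ∈ (0,1)`, an admissible `λ_max ∈ (0,1)`, a Borel probability measure
`F` on `[0, λ_max]`, and observations `d_s ≥ −1`.  With
`v_t = Σ_{s≤t} (1_{d_s≤0} d_s² + 1_{d_s>0} min(d_s², c*(q) d_s^q))`, the data-dependent
boundary is bounded by the `v`-parametrized boundary:
`sup{y : ∫ exp(λy − Σ_{s≤t} g(λ,d_s)) dF ≤ 1/α} ≤ sup{y : ∫ exp(λy − λ^q v_t) dF ≤ 1/α}`. -/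
theorem boundary_reduction_via_q_growth
    (q α lmax : ℝ) (hq : q ∈ Set.Ioc (1 : ℝ) 2) (hα : α ∈ Set.Ioo (0 : ℝ) 1)
    (hlmax : lmax ∈ Set.Ioo (0 : ℝ) 1)
    (hladm : -lmax - Real.log (1 - lmax) ≤ lmax ^ 2)
    (F : Measure ℝ) [IsProbabilityMeasure F] (hF_supp : F (Set.Icc 0 lmax)ᶜ = 0)
    (xstar cstar : ℝ)
    (hxstar : q < 2 →
      0 < xstar ∧
      q = xstar ^ 2 / ((1 + xstar) * (xstar - Real.log (1 + xstar))) ∧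
      cstar = xstar ^ (2 - q))
    (hcstar2 : q = 2 → cstar = 1)
    (d : ℕ → ℝ) (hd : ∀ s, -1 ≤ d s)
    (v : ℕ → ℝ)
    (hv : ∀ t, v t = ∑ s ∈ Finset.Icc 1 t,
      (if d s ≤ 0 then d s ^ 2 else min (d s ^ 2) (cstar * d s ^ q)))
    (t : ℕ) (ht : 1 ≤ t) :
    sSup {y : ℝ |
        (∫ l, Real.exp (l * y
          - ∑ s ∈ Finset.Icc 1 t, (l * d s - Real.log (1 + l * d s))) ∂F) ≤ 1 / α} ≤
      sSup {y : ℝ | (∫ l, Real.exp (l * y - l ^ q * v t) ∂F) ≤ 1 / α} :=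
  boundary_reduction_via_q_growth_general q α lmax hq hα hlmax hladm F hF_supp xstar cstar hxstar
    hcstar2 d hd v hv t
end

section
/- (Faxén-integral asymptotic for the mixture wealth.) Fix q ∈ (1,2], λ_max ∈ (0,1), and let f be a probability density on [0, λ_max], continuous on (0, λ_max], with f(λ) = f₀ λ^{q/2 − 1} + O(λ^{q/2}) as λ → 0⁺, f₀ > 0. Then for every κ > 0, as v → ∞: ∫_0^{λ_max} exp(κ v^{1/q} λ − v λ^q) f(λ) dλ = (f₀/q) · Fi(1/q, 1/2; κ) · v^{−1/2} · (1 + O(v^{−1/q})), where Fi(a, b; y) ≐ ∫_0^∞ exp(−τ + y τ^a) τ^{b−1} dτ is the Faxén integral (convergent for 0 ≤ a < 1, b > 0). -/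
/-!
Substituting `τ = v λ^q` turns `∫₀^L exp(κ v^{1/q} λ − v λ^q) λ^{qc−1} dλ` into
`(1/q) v^{−c} ∫₀^{v L^q} exp(−τ + κ τ^{1/q}) τ^{c−1} dτ`, a Faxén integral truncated at
`T = v L^q`; since `τ^{1/q}` is sublinear the Faxén integrals converge, and the tail beyond `T`
is at most `T⁻¹ Fi(1/q, c + 1; κ)`. Write `f = f₀ λ^{q/2−1} + r` with `|r| ≤ M λ^{q/2}` on
`(0, L]`. The leading part (`c = 1/2`) gives `(f₀/q) Fi(1/q, 1/2; κ) v^{−1/2}` up to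
`O(v^{−3/2})`, and the remainder (`c = 1/2 + 1/q`) is `O(v^{−1/2−1/q})`.
-/

open Real Filter Asymptotics MeasureTheory intervalIntegral Set Topology

noncomputable def faxenIntegrand (a b y τ : ℝ) : ℝ := exp (-τ + y * τ ^ a) * τ ^ (b - 1)

section Faxen

variable {a b : ℝ}

lemma faxenIntegrand_nonneg (a b y : ℝ) {τ : ℝ} (hτ : 0 ≤ τ) : 0 ≤ faxenIntegrand a b y τ := by
  unfold faxenIntegrand; positivity

lemma faxenIntegrand_add_one (a b y : ℝ) {τ : ℝ} (hτ : 0 < τ) :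
    faxenIntegrand a (b + 1) y τ = τ * faxenIntegrand a b y τ := by
  simp only [faxenIntegrand, add_sub_cancel_right, rpow_sub_one hτ.ne']
  field_simp

lemma exists_mul_rpow_le_half_add (ha₀ : 0 ≤ a) (ha₁ : a < 1) (y : ℝ) :
    ∃ C, ∀ τ, 0 ≤ τ → y * τ ^ a ≤ τ / 2 + C := by
  -- `2 |y| τ ^ a ≤ τ` as soon as `τ ≥ T`.
  set T := (2 * |y|) ^ (1 - a)⁻¹
  have hT : 0 ≤ T := by positivity
  refine ⟨|y| * T ^ a, fun τ hτ => ?_⟩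
  have hy : y * τ ^ a ≤ |y| * τ ^ a := by gcongr; exact le_abs_self y
  rcases le_total τ T with hτT | hTτ
  · have : |y| * τ ^ a ≤ |y| * T ^ a := by gcongr
    linarith
  · have hpow : 2 * |y| ≤ τ ^ (1 - a) := by
      calc 2 * |y| = T ^ (1 - a) := (rpow_inv_rpow (by positivity) (by linarith)).symm
        _ ≤ τ ^ (1 - a) := by gcongr
    have hsplit : τ ^ (1 - a) * τ ^ a = τ := by
      rw [← rpow_add' hτ (by norm_num), sub_add_cancel, rpow_one]
    have : 2 * |y| * τ ^ a ≤ τ :=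
      (mul_le_mul_of_nonneg_right hpow (rpow_nonneg hτ a)).trans_eq hsplit
    have : 0 ≤ |y| * T ^ a := by positivity
    linarith

lemma integrableOn_faxenIntegrand (ha₀ : 0 ≤ a) (ha₁ : a < 1) (hb : 0 < b) (y : ℝ) :
    IntegrableOn (faxenIntegrand a b y) (Ioi 0) := by
  obtain ⟨C, hC⟩ := exists_mul_rpow_le_half_add ha₀ ha₁ y
  have hdom : IntegrableOn (fun τ => exp C * (τ ^ (b - 1) * exp (-(1 / 2) * τ ^ (1 : ℝ))))
      (Ioi 0) :=
    (integrableOn_rpow_mul_exp_neg_mul_rpow (by linarith) one_pos (by norm_num)).const_mul _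
  refine hdom.mono' (by unfold faxenIntegrand; fun_prop) ?_
  refine (ae_restrict_iff' measurableSet_Ioi).2 (Eventually.of_forall fun τ (hτ : 0 < τ) => ?_)
  rw [norm_of_nonneg (faxenIntegrand_nonneg a b y hτ.le), faxenIntegrand, rpow_one]
  calc exp (-τ + y * τ ^ a) * τ ^ (b - 1) ≤ exp (C + -(1 / 2) * τ) * τ ^ (b - 1) := by
        gcongr ?_ * _
        exact exp_le_exp.2 (by linarith [hC τ hτ.le])
    _ = exp C * (τ ^ (b - 1) * exp (-(1 / 2) * τ)) := by rw [exp_add]; ring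

lemma setIntegral_Ioc_faxenIntegrand_le_setIntegral_Ioi (ha₀ : 0 ≤ a) (ha₁ : a < 1) (hb : 0 < b)
    (y T : ℝ) :
    ∫ τ in Ioc 0 T, faxenIntegrand a b y τ ≤ ∫ τ in Ioi 0, faxenIntegrand a b y τ :=
  setIntegral_mono_set (integrableOn_faxenIntegrand ha₀ ha₁ hb y)
    ((ae_restrict_iff' measurableSet_Ioi).2 (Eventually.of_forall
      fun τ (hτ : 0 < τ) => faxenIntegrand_nonneg a b y hτ.le))
    Ioc_subset_Ioi_self.eventuallyLE

lemma setIntegral_Ioi_faxenIntegrand_le (ha₀ : 0 ≤ a) (ha₁ : a < 1) (hb : 0 < b) (y : ℝ)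
    {T : ℝ} (hT : 0 < T) :
    ∫ τ in Ioi T, faxenIntegrand a b y τ ≤ T⁻¹ * ∫ τ in Ioi 0, faxenIntegrand a (b + 1) y τ := by
  have hb₁ := integrableOn_faxenIntegrand ha₀ ha₁ (by linarith : 0 < b + 1) y
  calc ∫ τ in Ioi T, faxenIntegrand a b y τ
      ≤ ∫ τ in Ioi T, T⁻¹ * faxenIntegrand a (b + 1) y τ := by
        refine setIntegral_mono_on
          ((integrableOn_faxenIntegrand ha₀ ha₁ hb y).mono_set (Ioi_subset_Ioi hT.le))
          ((hb₁.mono_set (Ioi_subset_Ioi hT.le)).const_mul _) measurableSet_Ioi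
          fun τ (hτ : T < τ) => ?_
        rw [faxenIntegrand_add_one a b y (hT.trans hτ), ← mul_assoc]
        exact le_mul_of_one_le_left (faxenIntegrand_nonneg a b y (hT.trans hτ).le)
          ((one_le_inv_mul₀ hT).2 hτ.le)
    _ ≤ T⁻¹ * ∫ τ in Ioi 0, faxenIntegrand a (b + 1) y τ := by
        rw [MeasureTheory.integral_const_mul]
        refine mul_le_mul_of_nonneg_left (setIntegral_mono_set hb₁ ?_ ?_) (inv_nonneg.2 hT.le)
        exacts [(ae_restrict_iff' measurableSet_Ioi).2 (Eventually.of_forall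
            fun τ (hτ : 0 < τ) => faxenIntegrand_nonneg a (b + 1) y hτ.le),
          (Ioi_subset_Ioi hT.le).eventuallyLE]

lemma isBigO_setIntegral_Ioc_faxenIntegrand_sub (ha₀ : 0 ≤ a) (ha₁ : a < 1) (hb : 0 < b)
    (y : ℝ) :
    (fun T => (∫ τ in Ioc 0 T, faxenIntegrand a b y τ) - ∫ τ in Ioi 0, faxenIntegrand a b y τ)
      =O[atTop] fun T => T⁻¹ := by
  refine IsBigO.of_bound (∫ τ in Ioi 0, faxenIntegrand a (b + 1) y τ) ?_
  filter_upwards [eventually_gt_atTop 0] with T hT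
  have htail : (∫ τ in Ioi 0, faxenIntegrand a b y τ) - ∫ τ in Ioc 0 T, faxenIntegrand a b y τ
      = ∫ τ in Ioi T, faxenIntegrand a b y τ := by
    rw [← setIntegral_sdiff measurableSet_Ioc (integrableOn_faxenIntegrand ha₀ ha₁ hb y)
      Ioc_subset_Ioi_self, Ioi_sdiff_Ioc, max_eq_right hT.le]
  rw [norm_sub_rev, htail, norm_of_nonneg (setIntegral_nonneg measurableSet_Ioi
    fun τ (hτ : T < τ) => faxenIntegrand_nonneg a b y (hT.trans hτ).le),
    norm_of_nonneg (inv_nonneg.2 hT.le), mul_comm]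
  exact setIntegral_Ioi_faxenIntegrand_le ha₀ ha₁ hb y hT

end Faxen

section Substitution

variable {q : ℝ}

lemma image_mul_rpow_Ioc (hq : 0 < q) {v L : ℝ} (hv : 0 < v) (hL : 0 < L) :
    (fun l => v * l ^ q) '' Ioc 0 L = Ioc 0 (v * L ^ q) := by
  ext τ
  constructor
  · rintro ⟨l, ⟨hl₀, hlL⟩, rfl⟩
    exact ⟨by positivity, mul_le_mul_of_nonneg_left (rpow_le_rpow hl₀.le hlL hq.le) hv.le⟩
  · rintro ⟨hτ₀, hτL⟩
    refine ⟨(τ / v) ^ q⁻¹, ⟨by positivity, ?_⟩, ?_⟩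
    · rw [← rpow_le_rpow_iff (by positivity) hL.le hq, rpow_inv_rpow (by positivity) hq.ne',
        div_le_iff₀' hv]
      exact hτL
    · simp only [rpow_inv_rpow (by positivity : 0 ≤ τ / v) hq.ne']
      field_simp

lemma faxenIntegrand_mul_rpow (hq : 0 < q) (y c : ℝ) {v l : ℝ} (hv : 0 < v) (hl : 0 < l) :
    |v * (q * l ^ (q - 1))| * faxenIntegrand (1 / q) c y (v * l ^ q)
      = q * v ^ c * (exp (y * v ^ (1 / q) * l - v * l ^ q) * l ^ (q * c - 1)) := by
  have hroot : (v * l ^ q) ^ (1 / q) = v ^ (1 / q) * l := by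
    rw [mul_rpow hv.le (by positivity), one_div, rpow_rpow_inv hl.le hq.ne']
  have hpow : (v * l ^ q) ^ (c - 1) * l ^ (q - 1) = v ^ (c - 1) * l ^ (q * c - 1) := by
    rw [mul_rpow hv.le (by positivity), ← rpow_mul hl.le, mul_assoc, ← rpow_add hl]
    ring_nf
  rw [rpow_sub_one hv.ne'] at hpow
  rw [abs_of_pos (by positivity), faxenIntegrand, hroot]
  rw [show -(v * l ^ q) + y * (v ^ (1 / q) * l) = y * v ^ (1 / q) * l - v * l ^ q by ring]
  calc v * (q * l ^ (q - 1)) * (exp (y * v ^ (1 / q) * l - v * l ^ q) * (v * l ^ q) ^ (c - 1))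
      = q * v * exp (y * v ^ (1 / q) * l - v * l ^ q) * ((v * l ^ q) ^ (c - 1) * l ^ (q - 1)) := by
        ring
    _ = _ := by rw [hpow]; field_simp

lemma setIntegral_Ioc_exp_mul_rpow_eq (hq : 0 < q) (y c : ℝ) {v L : ℝ} (hv : 0 < v)
    (hL : 0 < L) :
    ∫ l in Ioc 0 L, exp (y * v ^ (1 / q) * l - v * l ^ q) * l ^ (q * c - 1)
      = 1 / q * v ^ (-c) * ∫ τ in Ioc 0 (v * L ^ q), faxenIntegrand (1 / q) c y τ := by
  have hderiv : ∀ l ∈ Ioc 0 L,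
      HasDerivWithinAt (fun l => v * l ^ q) (v * (q * l ^ (q - 1))) (Ioc 0 L) l :=
    fun l hl => ((hasDerivAt_rpow_const (Or.inl hl.1.ne')).const_mul v).hasDerivWithinAt
  have hinj : InjOn (fun l => v * l ^ q) (Ioc 0 L) := fun l₁ hl₁ l₂ hl₂ h =>
    rpow_left_injOn hq.ne' hl₁.1.le hl₂.1.le (mul_left_cancel₀ hv.ne' h)
  rw [← image_mul_rpow_Ioc hq hv hL,
    integral_image_eq_integral_abs_deriv_smul measurableSet_Ioc hderiv hinj,
    ← MeasureTheory.integral_const_mul]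
  refine setIntegral_congr_fun measurableSet_Ioc fun l hl => ?_
  rw [smul_eq_mul, faxenIntegrand_mul_rpow hq y c hv hl.1, rpow_neg hv.le]
  field_simp

end Substitution

lemma exists_abs_le_mul_rpow_of_isBigO {g : ℝ → ℝ} {p L : ℝ} (hg : ContinuousOn g (Ioc 0 L))
    (hO : g =O[𝓝[>] 0] fun l => l ^ p) : ∃ M, ∀ l ∈ Ioc 0 L, |g l| ≤ M * l ^ p := by
  obtain ⟨C, hC⟩ := hO.bound
  obtain ⟨δ, hδ, hδC⟩ := mem_nhdsGT_iff_exists_Ioo_subset.1 hC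
  -- Away from `0`, `g / l ^ p` is continuous on a compact interval.
  obtain ⟨B, hB⟩ := isCompact_Icc.exists_bound_of_continuousOn (s := Icc δ L)
    (f := fun l => g l / l ^ p) <| (hg.mono fun l hl => ⟨hδ.trans_le hl.1, hl.2⟩).div
      (continuousOn_id.rpow_const fun l hl => Or.inl (hδ.trans_le hl.1).ne')
      fun l hl => (rpow_pos_of_pos (hδ.trans_le hl.1) p).ne'
  refine ⟨max C B, fun l hl => ?_⟩
  have hlp : 0 < l ^ p := rpow_pos_of_pos hl.1 p
  rcases lt_or_ge l δ with hlδ | hδl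
  · have := hδC ⟨hl.1, hlδ⟩
    simp only [mem_ofPred_eq, norm_eq_abs, abs_of_pos hlp] at this
    exact this.trans (by gcongr; exact le_max_left C B)
  · have := hB l ⟨hδl, hl.2⟩
    rw [norm_div, norm_eq_abs, norm_of_nonneg hlp.le, div_le_iff₀ hlp] at this
    exact this.trans (by gcongr; exact le_max_right C B)

lemma integrableOn_Ioc_rpow {e : ℝ} (he : -1 < e) (L : ℝ) :
    IntegrableOn (fun l => l ^ e) (Ioc 0 L) :=
  (intervalIntegral.intervalIntegrable_rpow' he).def'.mono_set Ioc_subset_uIoc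

lemma integrableOn_Ioc_of_abs_le_mul_rpow {g : ℝ → ℝ} {e L M : ℝ} (he : -1 < e)
    (hg : ContinuousOn g (Ioc 0 L)) (hgM : ∀ l ∈ Ioc 0 L, |g l| ≤ M * l ^ e) :
    IntegrableOn g (Ioc 0 L) :=
  ((integrableOn_Ioc_rpow he L).const_mul M).mono' (hg.aestronglyMeasurable measurableSet_Ioc)
    ((ae_restrict_iff' measurableSet_Ioc).2 (Eventually.of_forall hgM))

lemma integrableOn_exp_mul_sub_mul_rpow_mul {q : ℝ} (hq : 0 ≤ q) (s v : ℝ) {g : ℝ → ℝ} {L : ℝ}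
    (hg : IntegrableOn g (Ioc 0 L)) :
    IntegrableOn (fun l => exp (s * l - v * l ^ q) * g l) (Ioc 0 L) :=
  hg.continuousOn_mul_of_subset
    ((continuous_const.mul continuous_id).sub
      (continuous_const.mul (continuous_rpow_const hq))).rexp.continuousOn
    isCompact_Icc measurableSet_Ioc Ioc_subset_Icc_self

lemma setIntegral_exp_mul_eq_add {q : ℝ} (hq : 0 ≤ q) (s v c e : ℝ) {L : ℝ} {f : ℝ → ℝ}
    (he : -1 < e) (hf : IntegrableOn (fun l => f l - c * l ^ e) (Ioc 0 L)) :
    ∫ l in Ioc 0 L, exp (s * l - v * l ^ q) * f l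
      = c * (∫ l in Ioc 0 L, exp (s * l - v * l ^ q) * l ^ e)
        + ∫ l in Ioc 0 L, exp (s * l - v * l ^ q) * (f l - c * l ^ e) := by
  rw [← MeasureTheory.integral_const_mul, ← integral_add
    ((integrableOn_exp_mul_sub_mul_rpow_mul hq s v (integrableOn_Ioc_rpow he L)).const_mul c)
    (integrableOn_exp_mul_sub_mul_rpow_mul hq s v hf)]
  exact setIntegral_congr_fun measurableSet_Ioc fun l _ => by ring

lemma isBigO_rpow_atTop_of_le {r s : ℝ} (h : r ≤ s) :
    (fun v : ℝ => v ^ r) =O[atTop] fun v => v ^ s :=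
  IsBigO.of_bound 1 <| by
    filter_upwards [eventually_ge_atTop 1] with v hv
    rw [one_mul, norm_of_nonneg (by positivity), norm_of_nonneg (by positivity)]
    exact rpow_le_rpow_of_exponent_le hv h

lemma one_div_mem_Ico_of_one_lt {q : ℝ} (hq : 1 < q) : 1 / q ∈ Ico 0 1 :=
  ⟨by positivity, (div_lt_one (by linarith)).2 hq⟩

section Laplace

variable {q : ℝ}

lemma isBigO_setIntegral_exp_mul_rpow_sub (hq : 1 < q) (κ : ℝ) {L c : ℝ} (hL : 0 < L)
    (hc : 0 < c) :
    (fun v => (∫ l in Ioc 0 L, exp (κ * v ^ (1 / q) * l - v * l ^ q) * l ^ (q * c - 1))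
        - 1 / q * v ^ (-c) * ∫ τ in Ioi 0, faxenIntegrand (1 / q) c κ τ)
      =O[atTop] fun v => v ^ (-c - 1) := by
  obtain ⟨ha₀, ha₁⟩ := one_div_mem_Ico_of_one_lt hq
  have htrunc := (isBigO_setIntegral_Ioc_faxenIntegrand_sub ha₀ ha₁ hc κ).comp_tendsto
    (tendsto_id.atTop_mul_const (by positivity : 0 < L ^ q))
  have hinv : (fun v => (id v * L ^ q)⁻¹) =O[atTop] fun v => v⁻¹ :=
    ((isBigO_refl _ _).const_mul_left (L ^ q)⁻¹).congr_left fun v => by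
      rw [id, mul_inv, mul_comm]
  refine (((isBigO_refl (fun v => v ^ (-c)) atTop).mul (htrunc.trans hinv)).const_mul_left
    (1 / q)).congr' ?_ ?_
  · filter_upwards [eventually_gt_atTop 0] with v hv
    simp only [Function.comp_apply, id]
    rw [setIntegral_Ioc_exp_mul_rpow_eq (by linarith) κ c hv hL]
    ring
  · filter_upwards [eventually_gt_atTop 0] with v hv
    rw [rpow_sub_one hv.ne', div_eq_mul_inv]

lemma isBigO_setIntegral_exp_mul_of_abs_le (hq : 1 < q) (κ : ℝ) {L c M : ℝ} (hL : 0 < L)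
    (hc : 0 < c) {g : ℝ → ℝ} (hgM : ∀ l ∈ Ioc 0 L, |g l| ≤ M * l ^ (q * c - 1)) :
    (fun v => ∫ l in Ioc 0 L, exp (κ * v ^ (1 / q) * l - v * l ^ q) * g l)
      =O[atTop] fun v => v ^ (-c) := by
  obtain ⟨ha₀, ha₁⟩ := one_div_mem_Ico_of_one_lt hq
  have he : -1 < q * c - 1 := by nlinarith
  have hM : 0 ≤ M := nonneg_of_mul_nonneg_left ((abs_nonneg _).trans (hgM L ⟨hL, le_rfl⟩))
    (rpow_pos_of_pos hL _)
  refine IsBigO.of_bound (M / q * ∫ τ in Ioi 0, faxenIntegrand (1 / q) c κ τ) ?_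
  filter_upwards [eventually_gt_atTop 0] with v hv
  calc ‖∫ l in Ioc 0 L, exp (κ * v ^ (1 / q) * l - v * l ^ q) * g l‖
      ≤ ∫ l in Ioc 0 L, M * (exp (κ * v ^ (1 / q) * l - v * l ^ q) * l ^ (q * c - 1)) := by
        refine norm_integral_le_of_norm_le
          ((integrableOn_exp_mul_sub_mul_rpow_mul (by linarith) _ _
            (integrableOn_Ioc_rpow he L)).const_mul M)
          ((ae_restrict_iff' measurableSet_Ioc).2 (Eventually.of_forall fun l hl => ?_))
        rw [norm_mul, norm_of_nonneg (exp_pos _).le, norm_eq_abs, mul_left_comm]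
        exact mul_le_mul_of_nonneg_left (hgM l hl) (exp_pos _).le
    _ = M * (1 / q * v ^ (-c) * ∫ τ in Ioc 0 (v * L ^ q), faxenIntegrand (1 / q) c κ τ) := by
        rw [MeasureTheory.integral_const_mul,
          setIntegral_Ioc_exp_mul_rpow_eq (by linarith) κ c hv hL]
    _ ≤ M * (1 / q * v ^ (-c) * ∫ τ in Ioi 0, faxenIntegrand (1 / q) c κ τ) := by
        refine mul_le_mul_of_nonneg_left (mul_le_mul_of_nonneg_left ?_ (by positivity)) hM
        exact setIntegral_Ioc_faxenIntegrand_le_setIntegral_Ioi ha₀ ha₁ hc κ _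
    _ = M / q * (∫ τ in Ioi 0, faxenIntegrand (1 / q) c κ τ) * ‖v ^ (-c)‖ := by
        rw [norm_of_nonneg (by positivity)]
        ring

end Laplace

theorem faxen_asymptotic_mixture_wealth_general
    (q lmax f₀ : ℝ) (hq : q ∈ Set.Ioc (1 : ℝ) 2) (hlmax : lmax ∈ Set.Ioo (0 : ℝ) 1)
    (f : ℝ → ℝ)
    (hf_cont : ContinuousOn f (Set.Ioc 0 lmax))
    (hf_asymp : (fun l => f l - f₀ * l ^ (q / 2 - 1))
      =O[nhdsWithin 0 (Set.Ioi 0)] fun l => l ^ (q / 2))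
    (Fi : ℝ → ℝ → ℝ → ℝ)
    (hFi : ∀ a b y, Fi a b y = ∫ τ in Set.Ioi (0 : ℝ), Real.exp (-τ + y * τ ^ a) * τ ^ (b - 1))
    (κ : ℝ) :
    (fun v => (∫ l in (0 : ℝ)..lmax, Real.exp (κ * v ^ (1 / q) * l - v * l ^ q) * f l)
        - (f₀ / q) * Fi (1 / q) (1 / 2) κ * v ^ (-(1 : ℝ) / 2))
      =O[atTop] fun v : ℝ => v ^ (-(1 : ℝ) / 2 - 1 / q) := by
  obtain ⟨hq₁, -⟩ := hq
  obtain ⟨hL, -⟩ := hlmax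
  rw [show q / 2 - 1 = q * (1 / 2) - 1 by ring] at hf_asymp
  have hg : ContinuousOn (fun l => f l - f₀ * l ^ (q * (1 / 2) - 1)) (Ioc 0 lmax) := hf_cont.sub
    (continuousOn_const.mul (continuousOn_id.rpow_const fun l hl => Or.inl hl.1.ne'))
  obtain ⟨M, hM⟩ := exists_abs_le_mul_rpow_of_isBigO hg hf_asymp
  have hqc : q * (1 / 2 + 1 / q) - 1 = q / 2 := by field_simp; ring
  have hmain := (isBigO_setIntegral_exp_mul_rpow_sub hq₁ κ hL one_half_pos).trans
    (isBigO_rpow_atTop_of_le (s := -(1 / 2 + 1 / q))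
      (by linarith [(one_div_mem_Ico_of_one_lt hq₁).2]))
  have hrem := isBigO_setIntegral_exp_mul_of_abs_le hq₁ κ hL (c := 1 / 2 + 1 / q)
    (by positivity) (hqc ▸ hM)
  refine ((hmain.const_mul_left f₀).add hrem).congr' (Eventually.of_forall fun v => ?_)
    (Eventually.of_forall fun v => by ring_nf)
  dsimp only
  rw [integral_of_le hL.le, setIntegral_exp_mul_eq_add (by linarith) _ _ _ _ (by linarith)
      (integrableOn_Ioc_of_abs_le_mul_rpow (by linarith) hg hM),
    show Fi (1 / q) (1 / 2) κ = ∫ τ in Ioi 0, faxenIntegrand (1 / q) (1 / 2) κ τ from hFi _ _ _,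
    show (-1 : ℝ) / 2 = -(1 / 2) by norm_num]
  ring

/-- **Faxén-integral asymptotic for the mixture wealth.** Fix `q ∈ (1,2]`,
`λ_max ∈ (0,1)`, a probability density `f` on `[0, λ_max]`, continuous on `(0, λ_max]`,
with `f(λ) = f₀ λ^{q/2−1} + O(λ^{q/2})` as `λ → 0⁺`, `f₀ > 0`.  Then for every `κ > 0`,
as `v → ∞`,
`∫₀^{λ_max} exp(κ v^{1/q} λ − v λ^q) f(λ) dλ
   = (f₀/q) Fi(1/q, 1/2; κ) v^{−1/2} (1 + O(v^{−1/q}))`,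
with `Fi(a,b;y) = ∫₀^∞ exp(−τ + y τ^a) τ^{b−1} dτ` the Faxén integral. -/
theorem faxen_asymptotic_mixture_wealth
    (q lmax f₀ : ℝ) (hq : q ∈ Set.Ioc (1 : ℝ) 2) (hlmax : lmax ∈ Set.Ioo (0 : ℝ) 1)
    (hf₀ : 0 < f₀)
    (f : ℝ → ℝ)
    (hf_nonneg : ∀ l ∈ Set.Icc 0 lmax, 0 ≤ f l)
    (hf_prob : (∫ l in (0 : ℝ)..lmax, f l) = 1)
    (hf_cont : ContinuousOn f (Set.Ioc 0 lmax))
    (hf_asymp : (fun l => f l - f₀ * l ^ (q / 2 - 1))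
      =O[nhdsWithin 0 (Set.Ioi 0)] fun l => l ^ (q / 2))
    (Fi : ℝ → ℝ → ℝ → ℝ)
    (hFi : ∀ a b y, Fi a b y = ∫ τ in Set.Ioi (0 : ℝ), Real.exp (-τ + y * τ ^ a) * τ ^ (b - 1))
    (κ : ℝ) (hκ : 0 < κ) :
    (fun v => (∫ l in (0 : ℝ)..lmax, Real.exp (κ * v ^ (1 / q) * l - v * l ^ q) * f l)
        - (f₀ / q) * Fi (1 / q) (1 / 2) κ * v ^ (-(1 : ℝ) / 2))
      =O[atTop] fun v : ℝ => v ^ (-(1 : ℝ) / 2 - 1 / q) :=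
  faxen_asymptotic_mixture_wealth_general q lmax f₀ hq hlmax f hf_cont hf_asymp Fi hFi κ
end

section
/- (Lower sandwich.) Fix q ∈ (1,2], α ∈ (0,1), λ_max ∈ (0,1), and let f be a probability density on [0, λ_max], continuous on (0, λ_max], with f(λ) = f₀ λ^{q/2 − 1} + O(λ^{q/2}) as λ → 0⁺, f₀ > 0. Define M^{(q)}_α(v) ≐ sup{ s ∈ ℝ : ∫_0^{λ_max} exp(λs − λ^q v) f(λ) dλ ≤ 1/α }. Then v^{1/q} = o(M^{(q)}_α(v)) as v → ∞, i.e. M^{(q)}_α(v)/v^{1/q} → ∞. -/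
open Real Filter MeasureTheory intervalIntegral Set
open scoped Topology Interval

/-!
With `s = C v^{1/q}` and the substitution `x = λ v^{1/q}`, the exponent `λs − λ^q v` becomes
`C x − x^q`. Since `q > 1` this is bounded above on `[0, ∞)` and tends to `−∞`, so as `v → ∞`
the integrand tends to `0` at every `λ > 0` while staying below a constant multiple of `f`.
Dominated convergence sends the wealth at `s = C v^{1/q}` to `0 < 1/α`, hence eventually
`M(v) ≥ C v^{1/q}`, for every `C`. That bound needs the set defining `M` to be bounded above
(else `sSup` is `0`): `f` has positive mass on some `[t, λ_max]` with `t > 0`, and there the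
integrand grows like `exp(t s)`.
-/

noncomputable def mixtureWealth (f : ℝ → ℝ) (q b s v : ℝ) : ℝ :=
  ∫ l in (0 : ℝ)..b, exp (l * s - l ^ q * v) * f l

lemma mul_sub_rpow_le_of_nonneg {q C x : ℝ} (hq : 1 < q) (hx : 0 ≤ x) :
    C * x - x ^ q ≤ |C| * |C| ^ (1 / (q - 1)) := by
  set L := |C| ^ (1 / (q - 1))
  have hL : 0 ≤ L := rpow_nonneg (abs_nonneg C) _
  have hCx : C * x ≤ |C| * x := mul_le_mul_of_nonneg_right (le_abs_self C) hx
  rcases le_or_gt x L with hxL | hLx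
  · nlinarith [rpow_nonneg hx q, mul_le_mul_of_nonneg_left hxL (abs_nonneg C)]
  · have hx0 : 0 < x := hL.trans_lt hLx
    have hLq : L ^ (q - 1) = |C| := by
      rw [← rpow_mul (abs_nonneg C), one_div_mul_cancel (by linarith), rpow_one]
    have hCle : |C| ≤ x ^ (q - 1) := hLq ▸ rpow_le_rpow hL hLx.le (by linarith)
    have hxq : x ^ q = x ^ (q - 1) * x := by rw [← rpow_add_one hx0.ne']; ring_nf
    nlinarith [mul_nonneg (abs_nonneg C) hL]

lemma tendsto_mul_sub_rpow_atBot (C : ℝ) {q : ℝ} (hq : 1 < q) :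
    Tendsto (fun x : ℝ => C * x - x ^ q) atTop atBot := by
  have h : Tendsto (fun x : ℝ => C - x ^ (q - 1)) atTop atBot :=
    tendsto_atBot_add_const_left _ C
      (tendsto_neg_atTop_atBot.comp (tendsto_rpow_atTop (by linarith)))
  refine (tendsto_id.atTop_mul_atBot₀ h).congr' ?_
  filter_upwards [eventually_gt_atTop 0] with x hx
  rw [id, mul_sub, mul_comm x C, mul_comm x, ← rpow_add_one hx.ne', sub_add_cancel]

lemma mul_sub_rpow_mul_eq_rescaled (C : ℝ) {q l v : ℝ} (hq : 0 < q) (hl : 0 ≤ l) (hv : 0 ≤ v) :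
    l * (C * v ^ (1 / q)) - l ^ q * v = C * (l * v ^ (1 / q)) - (l * v ^ (1 / q)) ^ q := by
  rw [mul_rpow hl (rpow_nonneg hv _), ← rpow_mul hv, one_div_mul_cancel hq.ne', rpow_one]
  ring

lemma intervalIntegrable_exp_mul_sub_rpow_mul {f : ℝ → ℝ} {q a b : ℝ} (s v : ℝ) (hq : 0 ≤ q)
    (hf : IntervalIntegrable f volume a b) :
    IntervalIntegrable (fun l => exp (l * s - l ^ q * v) * f l) volume a b :=
  hf.continuousOn_mul (by have := continuous_rpow_const hq; fun_prop)

lemma tendsto_mixtureWealth_rpow_atTop {f : ℝ → ℝ} {q b : ℝ} (C : ℝ) (hq : 1 < q) (hb : 0 ≤ b)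
    (hf : IntervalIntegrable f volume 0 b) :
    Tendsto (fun v => mixtureWealth f q b (C * v ^ (1 / q)) v) atTop (𝓝 0) := by
  have hq0 : 0 < q := by linarith
  set K := |C| * |C| ^ (1 / (q - 1))
  have hmeas : ∀ v, AEStronglyMeasurable (fun l => exp (l * (C * v ^ (1 / q)) - l ^ q * v) * f l)
      (volume.restrict (Ι 0 b)) := fun v =>
    (intervalIntegrable_exp_mul_sub_rpow_mul _ v hq0.le hf).def'.aestronglyMeasurable
  have hbound : ∀ v, 0 ≤ v → ∀ l ∈ Ι 0 b,
      ‖exp (l * (C * v ^ (1 / q)) - l ^ q * v) * f l‖ ≤ exp K * ‖f l‖ := by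
    intro v hv l hl
    rw [uIoc_of_le hb] at hl
    rw [norm_mul, norm_of_nonneg (exp_nonneg _), mul_sub_rpow_mul_eq_rescaled C hq0 hl.1.le hv]
    gcongr
    exact mul_sub_rpow_le_of_nonneg hq (mul_nonneg hl.1.le (rpow_nonneg hv _))
  have hlim : ∀ l ∈ Ι 0 b,
      Tendsto (fun v => exp (l * (C * v ^ (1 / q)) - l ^ q * v) * f l) atTop (𝓝 0) := by
    intro l hl
    rw [uIoc_of_le hb] at hl
    have hexponent : Tendsto (fun v => l * (C * v ^ (1 / q)) - l ^ q * v) atTop atBot := by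
      refine ((tendsto_mul_sub_rpow_atBot C hq).comp
        ((tendsto_rpow_atTop (one_div_pos.2 hq0)).const_mul_atTop hl.1)).congr' ?_
      filter_upwards [eventually_ge_atTop 0] with v hv
      exact (mul_sub_rpow_mul_eq_rescaled C hq0 hl.1.le hv).symm
    simpa using (tendsto_exp_atBot.comp hexponent).mul_const (f l)
  simpa [mixtureWealth] using
    tendsto_integral_filter_of_dominated_convergence (fun l => exp K * ‖f l‖)
      (Eventually.of_forall hmeas)
      ((eventually_ge_atTop 0).mono fun v hv => ae_of_all _ (hbound v hv))
      (hf.norm.const_mul _) (ae_of_all _ hlim)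

lemma exists_pos_integral_of_integral_pos {f : ℝ → ℝ} {a b : ℝ} (hab : a < b)
    (hf : IntervalIntegrable f volume a b) (hpos : 0 < ∫ l in a..b, f l) :
    ∃ t ∈ Ioc a b, 0 < ∫ l in t..b, f l := by
  have hcont : ContinuousWithinAt (fun t => ∫ l in t..b, f l) (Ioc a b) a :=
    ((continuousOn_primitive_interval_left ((intervalIntegrable_iff').1 hf)).continuousWithinAt
      left_mem_uIcc).mono (uIcc_of_le hab.le ▸ Ioc_subset_Icc_self)
  have : (𝓝[Ioc a b] a).NeBot := left_nhdsWithin_Ioc_neBot hab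
  obtain ⟨t, hpos, ht⟩ := ((hcont.eventually (lt_mem_nhds hpos)).and self_mem_nhdsWithin).exists
  exact ⟨t, ht, hpos⟩

lemma bddAbove_setOf_mixtureWealth_le {f : ℝ → ℝ} {q b v : ℝ} (c : ℝ) (hq : 0 ≤ q) (hb : 0 < b)
    (hv : 0 ≤ v) (hf_nonneg : ∀ l ∈ Icc 0 b, 0 ≤ f l) (hf : IntervalIntegrable f volume 0 b)
    (hpos : 0 < ∫ l in (0 : ℝ)..b, f l) :
    BddAbove {s | mixtureWealth f q b s v ≤ c} := by
  obtain ⟨t, ⟨ht0, htb⟩, hmass⟩ := exists_pos_integral_of_integral_pos hb hf hpos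
  set p := ∫ l in t..b, f l
  refine ⟨max 0 ((log (c / p) + b ^ q * v) / t), fun s hs => ?_⟩
  rcases le_or_gt s 0 with hs0 | hs0
  · exact hs0.trans (le_max_left _ _)
  have hwealth := intervalIntegrable_exp_mul_sub_rpow_mul s v hq hf
  have hsub : uIcc t b ⊆ uIcc 0 b := by
    rw [uIcc_of_le htb, uIcc_of_le hb.le]; exact Icc_subset_Icc ht0.le le_rfl
  have hlower : exp (t * s - b ^ q * v) * p ≤ c :=
    calc exp (t * s - b ^ q * v) * p
        = ∫ l in t..b, exp (t * s - b ^ q * v) * f l :=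
          (intervalIntegral.integral_const_mul _ _).symm
      _ ≤ ∫ l in t..b, exp (l * s - l ^ q * v) * f l := by
          refine integral_mono_on htb ((hf.mono_set hsub).const_mul _) (hwealth.mono_set hsub) ?_
          intro l hl
          have hl0 : 0 ≤ l := ht0.le.trans hl.1
          gcongr
          · exact hf_nonneg l ⟨hl0, hl.2⟩
          · exact hl.1
          · exact hl.2
      _ ≤ mixtureWealth f q b s v := by
          refine integral_mono_interval ht0.le htb le_rfl ?_ hwealth
          filter_upwards [ae_restrict_mem measurableSet_Ioc] with l hl
          exact mul_nonneg (exp_nonneg _) (hf_nonneg l ⟨hl.1.le, hl.2⟩)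
      _ ≤ c := hs
  have hcp : 0 < c / p := lt_of_lt_of_le (exp_pos _) ((le_div_iff₀ hmass).2 hlower)
  have hlog : t * s - b ^ q * v ≤ log (c / p) :=
    (le_log_iff_exp_le hcp).2 ((le_div_iff₀ hmass).2 hlower)
  exact le_max_of_le_right ((le_div_iff₀ ht0).2 (by linarith))

theorem lower_sandwich_general
    (q α lmax : ℝ) (hq : q ∈ Set.Ioc (1 : ℝ) 2) (hα : α ∈ Set.Ioo (0 : ℝ) 1)
    (hlmax : lmax ∈ Set.Ioo (0 : ℝ) 1)
    (f : ℝ → ℝ)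
    (hf_nonneg : ∀ l ∈ Set.Icc 0 lmax, 0 ≤ f l)
    (hf_prob : (∫ l in (0 : ℝ)..lmax, f l) = 1)
    (M : ℝ → ℝ)
    (hM : ∀ v, M v = sSup {s : ℝ |
      (∫ l in (0 : ℝ)..lmax, Real.exp (l * s - l ^ q * v) * f l) ≤ 1 / α}) :
    Tendsto (fun v => M v / v ^ (1 / q)) atTop atTop := by
  have hf : IntervalIntegrable f volume 0 lmax := by
    by_contra h
    rw [integral_undef h] at hf_prob
    exact zero_ne_one hf_prob
  refine tendsto_atTop.2 fun C => ?_
  filter_upwards [(tendsto_mixtureWealth_rpow_atTop C hq.1 hlmax.1.le hf).eventually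
      (gt_mem_nhds (one_div_pos.2 hα.1)), eventually_gt_atTop 0] with v hwealth hv
  have hbdd := bddAbove_setOf_mixtureWealth_le (1 / α) (zero_lt_one.trans hq.1).le hlmax.1 hv.le
    hf_nonneg hf (hf_prob ▸ one_pos)
  have hCM : C * v ^ (1 / q) ≤ M v := hM v ▸ le_csSup hbdd hwealth.le
  exact (le_div_iff₀ (rpow_pos_of_pos hv _)).2 hCM

/-- **Lower sandwich.** `v^{1/q} = o(M^{(q)}_α(v))` as `v → ∞`, i.e.
`M^{(q)}_α(v) / v^{1/q} → ∞`, where `M^{(q)}_α(v)` is the `v`-parametrized mixture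
boundary `sup{s : ∫₀^{λ_max} exp(λs − λ^q v) f(λ) dλ ≤ 1/α}`. -/
theorem lower_sandwich
    (q α lmax f₀ : ℝ) (hq : q ∈ Set.Ioc (1 : ℝ) 2) (hα : α ∈ Set.Ioo (0 : ℝ) 1)
    (hlmax : lmax ∈ Set.Ioo (0 : ℝ) 1) (hf₀ : 0 < f₀)
    (f : ℝ → ℝ)
    (hf_nonneg : ∀ l ∈ Set.Icc 0 lmax, 0 ≤ f l)
    (hf_prob : (∫ l in (0 : ℝ)..lmax, f l) = 1)
    (hf_cont : ContinuousOn f (Set.Ioc 0 lmax))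
    (hf_asymp : (fun l => f l - f₀ * l ^ (q / 2 - 1))
      =O[nhdsWithin 0 (Set.Ioi 0)] fun l => l ^ (q / 2))
    (M : ℝ → ℝ)
    (hM : ∀ v, M v = sSup {s : ℝ |
      (∫ l in (0 : ℝ)..lmax, Real.exp (l * s - l ^ q * v) * f l) ≤ 1 / α}) :
    Tendsto (fun v => M v / v ^ (1 / q)) atTop atTop :=
  lower_sandwich_general q α lmax hq hα hlmax f hf_nonneg hf_prob M hM
end

section
/- (g̃-approximation inequality.) Fix k > 1 and define, for λ ∈ [0,1) and x > −1: g̃(λ, x; k) ≐ λ²x²/(2(1−λ)) if x ∈ (−1, 0]; g̃(λ, x; k) ≐ λ²x²/2 if x ∈ (0, 1]; and for x > 1, letting n ≐ ⌊log_k x⌋, x₁ ≐ k^n, x₂ ≐ k^{n+1}, α ≐ (x₂ − x)/(x₂ − x₁), and m ≐ λ²/(1 + λ x₂)²: g̃(λ, x; k) ≐ α g(λ, x₁) + (1−α) g(λ, x₂) − (1/2) m α(1−α)(x₂ − x₁)². Then for all λ ∈ [0,1), x > −1, and k > 1: g(λ, x) ≤ g̃(λ, x; k); moreover, for fixed x and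 k, g̃(λ, x; k) − g(λ, x) = O(λ³) as λ → 0⁺. -/
/-!
Write `g(λ, x) = λx - log (1 + λx)`. For `x ∈ (0, 1]` the bound is `log (1 + t) ≥ 2t / (2 + t)`.
For `x ∈ (-1, 0]` it is `sinh y ≤ y` at `y = log (1 + λx) ≤ 0`, combined with `1 + λx ≥ 1 - λ`.
For `x > 1`, `∂²g/∂x² = λ² / (1 + λx)² ≥ m` on `[0, x₂]`, so `g(λ, ·)` is `m`-strongly convex
there, and the strong convexity inequality at `x = αx₁ + (1 - α)x₂` is exactly `g ≤ g̃`.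

For the asymptotics, `g(λ, x) = λ²x²/2 + O(λ³)`, and in each regime `g̃ - λ²x²/2` is, up to
`O(λ³)`, `λ²` times a function of `λ` that is differentiable and vanishes at `0` (for `x > 1` by
`αx₁² + (1 - α)x₂² - x² = α(1 - α)(x₂ - x₁)²`).
-/

open Real Filter Asymptotics Topology Set

lemma sub_log_one_add_le_sq_div_two {t : ℝ} (ht : 0 ≤ t) : t - log (1 + t) ≤ t ^ 2 / 2 := by
  have h : t - t ^ 2 / 2 ≤ 2 * t / (t + 2) := by
    rw [le_div_iff₀ (by positivity)]
    nlinarith [pow_nonneg ht 3]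
  linarith [le_log_one_add_of_nonneg ht]

lemma sub_log_one_add_le_of_nonpos {t : ℝ} (ht₁ : -1 < t) (ht₀ : t ≤ 0) :
    t - log (1 + t) ≤ t ^ 2 / (2 * (1 + t)) := by
  have hv : 0 < 1 + t := by linarith
  have h := sinh_le_self_iff.2 (log_nonpos hv.le (by linarith))
  rw [sinh_log hv] at h
  have : t - ((1 + t) - (1 + t)⁻¹) / 2 = t ^ 2 / (2 * (1 + t)) := by
    field_simp; ring
  linarith

lemma isBigO_sub_log_one_add_sub_sq :
    (fun t => t - log (1 + t) - t ^ 2 / 2) =O[𝓝 0] fun t => t ^ 3 := by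
  refine IsBigO.of_bound 2 ?_
  filter_upwards [Metric.ball_mem_nhds (0 : ℝ) (by norm_num : (0 : ℝ) < 1 / 2)] with t ht
  rw [Metric.mem_ball, dist_zero_right, Real.norm_eq_abs] at ht
  have h := abs_log_sub_add_sum_range_le (x := -t) (by rw [abs_neg]; linarith) 2
  norm_num [Finset.sum_range_succ] at h
  rw [Real.norm_eq_abs, Real.norm_eq_abs, abs_pow]
  calc |t - log (1 + t) - t ^ 2 / 2| = |-t + t ^ 2 / 2 + log (1 + t)| := by
        rw [← abs_neg]; ring_nf
    _ ≤ |t| ^ 3 / (1 - |t|) := h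
    _ ≤ 2 * |t| ^ 3 := by
        rw [div_le_iff₀ (by linarith)]
        nlinarith [pow_nonneg (abs_nonneg t) 3]

lemma isBigO_mul_sub_log_one_add_mul_sub_sq (x : ℝ) :
    (fun l => l * x - log (1 + l * x) - l ^ 2 * x ^ 2 / 2) =O[𝓝 0] fun l => l ^ 3 := by
  have hx : Tendsto (fun l : ℝ => l * x) (𝓝 0) (𝓝 0) := by
    simpa using (continuous_mul_const x).tendsto 0
  have hcube : ((fun t : ℝ => t ^ 3) ∘ fun l => l * x) =O[𝓝 0] fun l => l ^ 3 :=
    ((isBigO_refl (fun l : ℝ => l ^ 3) (𝓝 0)).const_mul_left (x ^ 3)).congr_left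
      fun l => by simp only [Function.comp_apply]; ring
  exact ((isBigO_sub_log_one_add_sub_sq.comp_tendsto hx).trans hcube).congr_left
    fun l => by simp only [Function.comp_apply]; ring

lemma isBigO_sq_mul_sub_of_differentiableAt {h : ℝ → ℝ} (hh : DifferentiableAt ℝ h 0) :
    (fun l => l ^ 2 * (h l - h 0)) =O[𝓝 0] fun l => l ^ 3 :=
  ((isBigO_refl (fun l : ℝ => l ^ 2) (𝓝 0)).mul hh.isBigO_sub).congr_right fun l => by ring

lemma strongConvexOn_of_hasDerivWithinAt2 {D : Set ℝ} (hD : Convex ℝ D) {f f' f'' : ℝ → ℝ}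
    {m : ℝ} (hf : ContinuousOn f D)
    (hf' : ∀ x ∈ interior D, HasDerivWithinAt f (f' x) (interior D) x)
    (hf'' : ∀ x ∈ interior D, HasDerivWithinAt f' (f'' x) (interior D) x)
    (hm : ∀ x ∈ interior D, m ≤ f'' x) : StrongConvexOn D m f := by
  rw [strongConvexOn_iff_convex]
  simp only [Real.norm_eq_abs, sq_abs]
  refine convexOn_of_hasDerivWithinAt2_nonneg hD (f' := fun x => f' x - m * x)
    (f'' := fun x => f'' x - m) ?_ (fun x hx => ?_) (fun x hx => ?_)
    (fun x hx => sub_nonneg.2 (hm x hx))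
  · exact hf.sub (by fun_prop)
  · exact ((hf' x hx).fun_sub ((hasDerivAt_pow 2 x).const_mul (m / 2)).hasDerivWithinAt).congr_deriv
      (by push_cast; ring)
  · simpa using (hf'' x hx).fun_sub ((hasDerivAt_id x).const_mul m).hasDerivWithinAt

lemma StrongConvexOn.apply_le_of_eq_convex_combination {s : Set ℝ} {m : ℝ} {f : ℝ → ℝ}
    (hf : StrongConvexOn s m f) {x x₁ x₂ a : ℝ} (hx₁ : x₁ ∈ s) (hx₂ : x₂ ∈ s)
    (ha₀ : 0 ≤ a) (ha₁ : a ≤ 1) (hx : x = a * x₁ + (1 - a) * x₂) :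
    f x ≤ a * f x₁ + (1 - a) * f x₂ - 1 / 2 * m * a * (1 - a) * (x₂ - x₁) ^ 2 := by
  have h := hf.2 hx₁ hx₂ ha₀ (sub_nonneg.2 ha₁) (add_sub_cancel a 1)
  simp only [smul_eq_mul, Real.norm_eq_abs, sq_abs, ← hx] at h
  linarith [show (x₁ - x₂) ^ 2 = (x₂ - x₁) ^ 2 by ring]

lemma hasDerivAt_mul_sub_log_one_add {l y : ℝ} (hy : 1 + l * y ≠ 0) :
    HasDerivAt (fun y => l * y - log (1 + l * y)) (l - l / (1 + l * y)) y := by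
  have h := ((hasDerivAt_id' y).const_mul l).const_add 1
  exact (((hasDerivAt_id' y).const_mul l).fun_sub (h.log hy)).congr_deriv (by ring)

lemma hasDerivAt_sub_div_one_add_mul {l y : ℝ} (hy : 1 + l * y ≠ 0) :
    HasDerivAt (fun y => l - l / (1 + l * y)) (l ^ 2 / (1 + l * y) ^ 2) y := by
  have h := ((hasDerivAt_id' y).const_mul l).const_add 1
  exact ((hasDerivAt_const y l).fun_sub ((hasDerivAt_const y l).fun_div h hy)).congr_deriv
    (by ring)

lemma strongConvexOn_mul_sub_log_one_add {l b : ℝ} (hl : 0 ≤ l) :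
    StrongConvexOn (Icc 0 b) (l ^ 2 / (1 + l * b) ^ 2) fun y => l * y - log (1 + l * y) := by
  have hpos : ∀ y ∈ Icc 0 b, 0 < 1 + l * y := fun y hy => by nlinarith [hy.1]
  refine strongConvexOn_of_hasDerivWithinAt2 (convex_Icc 0 b)
    (f' := fun y => l - l / (1 + l * y)) (f'' := fun y => l ^ 2 / (1 + l * y) ^ 2) (fun y hy => ?_)
    (fun y hy => ?_) (fun y hy => ?_) (fun y hy => ?_) <;> try rw [interior_Icc] at *
  · exact (hasDerivAt_mul_sub_log_one_add (hpos y hy).ne').continuousAt.continuousWithinAt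
  · exact (hasDerivAt_mul_sub_log_one_add (hpos y (Ioo_subset_Icc_self hy)).ne').hasDerivWithinAt
  · exact (hasDerivAt_sub_div_one_add_mul (hpos y (Ioo_subset_Icc_self hy)).ne').hasDerivWithinAt
  · have hy₀ := hpos y (Ioo_subset_Icc_self hy)
    have hle : 1 + l * y ≤ 1 + l * b := by nlinarith [hy.2]
    gcongr

lemma zpow_floor_logb_le {k x : ℝ} (hk : 1 < k) (hx : 0 < x) : k ^ ⌊logb k x⌋ ≤ x := by
  rw [← rpow_intCast, ← le_logb_iff_rpow_le hk hx]
  exact Int.floor_le _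

lemma lt_zpow_floor_logb_add_one {k x : ℝ} (hk : 1 < k) (hx : 0 < x) :
    x < k ^ (⌊logb k x⌋ + 1) := by
  rw [← rpow_intCast, ← logb_lt_iff_lt_rpow hk hx]
  push_cast
  exact Int.lt_floor_add_one _

lemma div_sub_mem_Icc_and_eq_convex_combination {x x₁ x₂ : ℝ} (h₁ : x₁ ≤ x) (h₂ : x < x₂) :
    (x₂ - x) / (x₂ - x₁) ∈ Icc 0 1 ∧
      x = (x₂ - x) / (x₂ - x₁) * x₁ + (1 - (x₂ - x) / (x₂ - x₁)) * x₂ := by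
  have hpos : 0 < x₂ - x₁ := by linarith
  refine ⟨⟨by positivity, (div_le_one hpos).2 (by linarith)⟩, ?_⟩
  field_simp
  ring

lemma mul_sub_log_one_add_le_of_nonpos {l x : ℝ} (hl : l ∈ Ico 0 1) (hx₁ : -1 < x) (hx₀ : x ≤ 0) :
    l * x - log (1 + l * x) ≤ l ^ 2 * x ^ 2 / (2 * (1 - l)) := by
  have hlx : 1 - l ≤ 1 + l * x := by nlinarith [hl.1]
  calc l * x - log (1 + l * x) ≤ (l * x) ^ 2 / (2 * (1 + l * x)) :=
        sub_log_one_add_le_of_nonpos (by nlinarith [hl.2]) (mul_nonpos_of_nonneg_of_nonpos hl.1 hx₀)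
    _ ≤ (l * x) ^ 2 / (2 * (1 - l)) := by
        gcongr
        linarith [hl.2]
    _ = l ^ 2 * x ^ 2 / (2 * (1 - l)) := by ring

lemma isBigO_sq_mul_sq_div_one_sub_sub (x : ℝ) :
    (fun l => l ^ 2 * x ^ 2 / (2 * (1 - l)) - (l * x - log (1 + l * x))) =O[𝓝 0]
      fun l => l ^ 3 := by
  have hd : DifferentiableAt ℝ (fun l : ℝ => (1 - l)⁻¹) 0 := by fun_prop (disch := norm_num)
  refine (((isBigO_sq_mul_sub_of_differentiableAt hd).const_mul_left (x ^ 2 / 2)).sub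
    (isBigO_mul_sub_log_one_add_mul_sub_sq x)).congr_left fun l => ?_
  simp only [sub_zero, inv_one, div_mul_eq_div_div]
  ring

lemma isBigO_interpolation_sub {x x₁ x₂ a : ℝ} (hx : x = a * x₁ + (1 - a) * x₂) :
    (fun l => a * (l * x₁ - log (1 + l * x₁)) + (1 - a) * (l * x₂ - log (1 + l * x₂))
        - 1 / 2 * (l ^ 2 / (1 + l * x₂) ^ 2) * a * (1 - a) * (x₂ - x₁) ^ 2
        - (l * x - log (1 + l * x))) =O[𝓝 0] fun l => l ^ 3 := by
  have hd : DifferentiableAt ℝ (fun l : ℝ => ((1 + l * x₂) ^ 2)⁻¹) 0 := by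
    fun_prop (disch := norm_num)
  refine ((((isBigO_mul_sub_log_one_add_mul_sub_sq x₁).const_mul_left a).add
    ((isBigO_mul_sub_log_one_add_mul_sub_sq x₂).const_mul_left (1 - a))).sub
    (isBigO_mul_sub_log_one_add_mul_sub_sq x) |>.sub
    ((isBigO_sq_mul_sub_of_differentiableAt hd).const_mul_left
      (a * (1 - a) * (x₂ - x₁) ^ 2 / 2))).congr_left fun l => ?_
  simp only [zero_mul, add_zero, one_pow, inv_one]
  subst hx
  ring

/-- **g̃-approximation.** Fix `k > 1` and let `g̃(λ,x;k)` be the grid upper approximation of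
`g(λ,x) = λx − log(1+λx)`: `λ²x²/(2(1−λ))` on `(−1,0]`, `λ²x²/2` on `(0,1]`, and the
strong-convexity interpolation on the exponential grid `[k^n, k^{n+1})`, `n = ⌊log_k x⌋`,
for `x > 1`.  Then `g(λ,x) ≤ g̃(λ,x;k)` for all `λ ∈ [0,1)`, `x > −1`; and for fixed `x`
(and `k`), `g̃(λ,x;k) − g(λ,x) = O(λ³)` as `λ → 0⁺`. -/
theorem gtilde_approximation
    (k : ℝ) (hk : 1 < k)
    (gt : ℝ → ℝ → ℝ)
    (hgt_neg : ∀ l x : ℝ, -1 < x → x ≤ 0 → gt l x = l ^ 2 * x ^ 2 / (2 * (1 - l)))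
    (hgt_mid : ∀ l x : ℝ, 0 < x → x ≤ 1 → gt l x = l ^ 2 * x ^ 2 / 2)
    (hgt_big : ∀ l x : ℝ, 1 < x → ∀ x₁ x₂ a mm : ℝ,
      x₁ = k ^ ⌊Real.logb k x⌋ → x₂ = k ^ (⌊Real.logb k x⌋ + 1) →
      a = (x₂ - x) / (x₂ - x₁) → mm = l ^ 2 / (1 + l * x₂) ^ 2 →
      gt l x = a * (l * x₁ - Real.log (1 + l * x₁))
        + (1 - a) * (l * x₂ - Real.log (1 + l * x₂))
        - (1 / 2) * mm * a * (1 - a) * (x₂ - x₁) ^ 2) :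
    (∀ l ∈ Set.Ico (0 : ℝ) 1, ∀ x : ℝ, -1 < x →
      l * x - Real.log (1 + l * x) ≤ gt l x) ∧
    (∀ x : ℝ, -1 < x →
      (fun l => gt l x - (l * x - Real.log (1 + l * x)))
        =O[nhdsWithin 0 (Set.Ioi 0)] fun l => l ^ 3) := by
  suffices h : ∀ x : ℝ, -1 < x → (∀ l ∈ Ico (0 : ℝ) 1, l * x - log (1 + l * x) ≤ gt l x) ∧
      (fun l => gt l x - (l * x - log (1 + l * x))) =O[𝓝 0] fun l => l ^ 3 from
    ⟨fun l hl x hx => (h x hx).1 l hl, fun x hx => (h x hx).2.mono nhdsWithin_le_nhds⟩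
  intro x hx
  rcases le_or_gt x 0 with hx₀ | hx₀
  · simp only [hgt_neg _ x hx hx₀]
    exact ⟨fun l hl => mul_sub_log_one_add_le_of_nonpos hl hx hx₀,
      isBigO_sq_mul_sq_div_one_sub_sub x⟩
  rcases le_or_gt x 1 with hx₁ | hx₁
  · simp only [hgt_mid _ x hx₀ hx₁]
    refine ⟨fun l hl => ?_, (isBigO_mul_sub_log_one_add_mul_sub_sq x).neg_left.congr_left
      fun l => by ring⟩
    simpa [mul_pow] using sub_log_one_add_le_sq_div_two (mul_nonneg hl.1 hx₀.le)
  have hlow : k ^ ⌊logb k x⌋ ≤ x := zpow_floor_logb_le hk (by linarith)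
  have hup : x < k ^ (⌊logb k x⌋ + 1) := lt_zpow_floor_logb_add_one hk (by linarith)
  obtain ⟨ha, hxa⟩ := div_sub_mem_Icc_and_eq_convex_combination hlow hup
  simp only [hgt_big _ x hx₁ _ _ _ _ rfl rfl rfl rfl]
  refine ⟨fun l hl => ?_, isBigO_interpolation_sub hxa⟩
  exact (strongConvexOn_mul_sub_log_one_add hl.1).apply_le_of_eq_convex_combination
    ⟨(zpow_pos (by linarith) _).le, by linarith⟩ ⟨by linarith, le_rfl⟩ ha.1 ha.2 hxa
end
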